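/- arXiv:1909.12645 — 13 statements merged into one kernel-verified Lean document; each statement's English description precedes it below -/
import Mathlib

section
/- If a positive integer x is of the form 4^r(8k+7) for nonnegative integers r and k, then none of x-2, x-6, x+2, x+6 is of that form (i.e., each of them, if positive, can be written as a sum of three integer squares). -/
/-! The numbers `4 ^ r * (8 * k + 7)` are `≡ 0, 4` or `7 (mod 8)`, and no two of these residues
differ by `±2` or `±6` modulo `8`. -/

lemma four_pow_mul_eight_mul_add_seven_emod_eight (r : ℕ) (k : ℤ) :
    4 ^ r * (8 * k + 7) % 8 = 0 ∨ 4 ^ r * (8 * k + 7) % 8 = 4 ∨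
      4 ^ r * (8 * k + 7) % 8 = 7 := by
  rcases r with _ | _ | n
  · omega
  · omega
  · left
    rw [show (4 : ℤ) ^ (n + 2) * (8 * k + 7) = 8 * (2 * 4 ^ n * (8 * k + 7)) by ring]
    exact Int.mul_emod_right _ _

theorem bad_form_shifts_general (x : ℤ)
    (h : ∃ r k : ℕ, x = 4 ^ r * (8 * k + 7)) :
    (¬ ∃ r k : ℕ, x - 2 = 4 ^ r * (8 * k + 7)) ∧
    (¬ ∃ r k : ℕ, x - 6 = 4 ^ r * (8 * k + 7)) ∧
    (¬ ∃ r k : ℕ, x + 2 = 4 ^ r * (8 * k + 7)) ∧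
    (¬ ∃ r k : ℕ, x + 6 = 4 ^ r * (8 * k + 7)) := by
  obtain ⟨r, k, rfl⟩ := h
  have hx := four_pow_mul_eight_mul_add_seven_emod_eight r k
  refine ⟨?_, ?_, ?_, ?_⟩ <;>
  · rintro ⟨s, m, hy⟩
    have := four_pow_mul_eight_mul_add_seven_emod_eight s m
    rw [← hy] at this
    omega

theorem bad_form_shifts (x : ℤ) (hx : 0 < x)
    (h : ∃ r k : ℕ, x = 4 ^ r * (8 * k + 7)) :
    (¬ ∃ r k : ℕ, x - 2 = 4 ^ r * (8 * k + 7)) ∧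
    (¬ ∃ r k : ℕ, x - 6 = 4 ^ r * (8 * k + 7)) ∧
    (¬ ∃ r k : ℕ, x + 2 = 4 ^ r * (8 * k + 7)) ∧
    (¬ ∃ r k : ℕ, x + 6 = 4 ^ r * (8 * k + 7)) :=
  bad_form_shifts_general x h
end

section
/- Let A be an n×n integer matrix that is entrywise nonnegative, positive semidefinite, and of rank 1, and let d be the greatest common divisor of its diagonal entries. Then d divides every entry of A. -/
/-!
Rank one forces every $2 \times 2$ minor to vanish, so by symmetry $A_{ij}^2 = A_{ii} A_{jj}$.
Hence $d^2 \mid A_{ij}^2$, and $d \mid A_{ij}$ because $\mathbb{Z}$ is integrally closed.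
-/

namespace Matrix

theorem mul_eq_mul_of_rank_le_one {m n R : Type*} [Fintype n] [CommRing R] [IsDomain R]
    {M : Matrix m n R} (hM : M.rank ≤ 1) (i j : m) (k l : n) :
    M i k * M j l = M i l * M j k := by
  have hminor : (M.submatrix ![i, j] ![k, l]).rank ≤ 1 := (rank_submatrix_le _ _ _).trans hM
  have hdet : (M.submatrix ![i, j] ![k, l]).det = 0 := by
    by_contra hdet
    rw [rank_of_det_ne_zero hdet] at hminor
    simp at hminor
  rw [det_fin_two] at hdet
  simpa [sub_eq_zero] using hdet

end Matrix

theorem dvd_of_sq_eq_mul {R : Type*} [CommRing R] [IsDomain R] [IsIntegrallyClosed R]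
    {a b c d : R} (ha : d ∣ a) (hb : d ∣ b) (hc : c ^ 2 = a * b) : d ∣ c := by
  rw [← IsIntegrallyClosed.pow_dvd_pow_iff two_ne_zero, hc, sq]
  exact mul_dvd_mul ha hb

theorem gcd_diag_dvd_entries_general (n : ℕ) (A : Matrix (Fin n) (Fin n) ℤ)
    (hpsd : Matrix.PosSemidef (A.map ((↑) : ℤ → ℝ)))
    (hrk : Matrix.rank (A.map ((↑) : ℤ → ℝ)) = 1) :
    ∀ i j, (Finset.univ.gcd fun i => A i i) ∣ A i j := by
  intro i j
  have hsymm : (A j i : ℝ) = A i j := by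
    simpa using hpsd.isHermitian.apply i j
  have hminor : A i j ^ 2 = A i i * A j j := by
    have := Matrix.mul_eq_mul_of_rank_le_one hrk.le i j i j
    simp only [Matrix.map_apply, hsymm] at this
    exact_mod_cast (sq (A i j : ℝ)).trans this.symm
  exact dvd_of_sq_eq_mul (Finset.gcd_dvd (Finset.mem_univ i)) (Finset.gcd_dvd (Finset.mem_univ j))
    hminor

theorem gcd_diag_dvd_entries (n : ℕ) (A : Matrix (Fin n) (Fin n) ℤ)
    (hnn : ∀ i j, 0 ≤ A i j)
    (hpsd : Matrix.PosSemidef (A.map ((↑) : ℤ → ℝ)))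
    (hrk : Matrix.rank (A.map ((↑) : ℤ → ℝ)) = 1) :
    ∀ i j, (Finset.univ.gcd fun i => A i i) ∣ A i j :=
  gcd_diag_dvd_entries_general n A hpsd hrk
end

section
/- Let B be an n×n integer matrix that is entrywise nonnegative, positive semidefinite, of rank 1, and such that the gcd of its diagonal entries equals 1. Then every diagonal entry of B is a perfect square. -/
/-! Vanishing of the 2 × 2 minors of the symmetric rank-one matrix gives `b_ii b_jj = b_ij²`,
and since the diagonal of a positive semidefinite matrix is nonnegative,
`b_ii = b_ii · gcd_j b_jj = gcd_j (b_ij²) = (gcd_j b_ij)²`. -/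

namespace Matrix

variable {m n K : Type*} [Fintype n] [Field K]

theorem exists_eq_vecMulVec_of_rank_le_one {A : Matrix m n K} (h : A.rank ≤ 1) :
    ∃ u v, A = vecMulVec u v := by
  classical
  obtain ⟨u, hu⟩ := finrank_le_one_iff.mp h
  choose v hv using fun j => hu ⟨A.mulVecLin (Pi.single j 1), LinearMap.mem_range_self _ _⟩
  refine ⟨u, v, ext fun i j => ?_⟩
  have hcol := congrFun (congrArg Subtype.val (hv j)) i
  simp only [SetLike.val_smul, Pi.smul_apply, smul_eq_mul, mulVecBilin_apply, mulVec_single,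
    MulOpposite.op_one, col_apply, one_smul] at hcol
  simp [vecMulVec_apply, ← hcol, mul_comm]

theorem mul_eq_mul_of_rank_le_one_s3 {A : Matrix m n K} (h : A.rank ≤ 1) (i i' : m) (j j' : n) :
    A i j * A i' j' = A i j' * A i' j := by
  obtain ⟨u, v, rfl⟩ := exists_eq_vecMulVec_of_rank_le_one h
  simp only [vecMulVec_apply]
  ring

end Matrix

namespace Int

theorem finset_gcd_pow {ι : Type*} (s : Finset ι) (f : ι → ℤ) {k : ℕ} (hk : k ≠ 0) :
    (s.gcd fun i => f i ^ k) = s.gcd f ^ k := by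
  classical
  induction s using Finset.induction_on with
  | empty => simp [hk]
  | insert a s _ ih =>
    rw [Finset.gcd_insert, Finset.gcd_insert, ih, ← Int.coe_gcd, ← Int.coe_gcd, Int.pow_gcd_pow]
    push_cast
    rfl

theorem exists_eq_sq_of_forall_mul_eq_sq {ι : Type*} {s : Finset ι} {a : ℤ} {f c : ι → ℤ}
    (ha : 0 ≤ a) (hs : s.gcd f = 1) (hsq : ∀ i ∈ s, a * f i = c i ^ 2) : ∃ m, a = m ^ 2 :=
  ⟨s.gcd c, calc
    a = normalize a * s.gcd f := by rw [hs, mul_one, Int.normalize_of_nonneg ha]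
    _ = s.gcd fun i => a * f i := (Finset.gcd_mul_left ..).symm
    _ = s.gcd fun i => c i ^ 2 := Finset.gcd_congr rfl hsq
    _ = s.gcd c ^ 2 := finset_gcd_pow s c two_ne_zero⟩

end Int

theorem diag_perfect_square_general (n : ℕ) (B : Matrix (Fin n) (Fin n) ℤ)
    (hpsd : Matrix.PosSemidef (B.map ((↑) : ℤ → ℝ)))
    (hrk : Matrix.rank (B.map ((↑) : ℤ → ℝ)) = 1)
    (hgcd : (Finset.univ.gcd fun i => B i i) = 1) :
    ∀ i, ∃ m : ℤ, B i i = m ^ 2 := by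
  have hminor (i j : Fin n) : B i i * B j j = B i j ^ 2 := by
    have hsymm : B j i = B i j := by simpa using hpsd.isHermitian.apply i j
    have hrank : (B i i : ℝ) * B j j = B i j * B j i := by
      simpa using Matrix.mul_eq_mul_of_rank_le_one_s3 hrk.le i j i j
    rw [hsymm, ← sq] at hrank
    exact_mod_cast hrank
  intro i
  have hdiag : 0 ≤ B i i := by simpa using hpsd.diag_nonneg (i := i)
  exact Int.exists_eq_sq_of_forall_mul_eq_sq hdiag hgcd fun j _ => hminor i j

theorem diag_perfect_square (n : ℕ) (B : Matrix (Fin n) (Fin n) ℤ)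
    (hnn : ∀ i j, 0 ≤ B i j)
    (hpsd : Matrix.PosSemidef (B.map ((↑) : ℤ → ℝ)))
    (hrk : Matrix.rank (B.map ((↑) : ℤ → ℝ)) = 1)
    (hgcd : (Finset.univ.gcd fun i => B i i) = 1) :
    ∀ i, ∃ m : ℤ, B i i = m ^ 2 :=
  diag_perfect_square_general n B hpsd hrk hgcd
end

section
/- Let A be an n×n integer doubly nonnegative matrix of rank 1. Then A admits an integer cp-factorization A = V V^T with V an entrywise nonnegative integer matrix, and its integer cp-rank equals the integer cp-rank of the 1×1 matrix [d], where d is the gcd of the diagonal entries of A. -/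
/-!
A rank-one matrix has vanishing `2 × 2` minors, so a symmetric nonnegative integer one is
`g • b bᵀ` with `b` a nonnegative primitive vector and `g` the gcd of the diagonal.
If `V Vᵀ = g • b bᵀ`, the equality case of Cauchy–Schwarz makes every column of `V`
proportional to `b`, and primitivity of `b` makes the factor integral: `V = b tᵀ` with
`∑ tₖ² = g`. So integer cp-factorizations of `A` with `m` columns are exactly representations
of `g` as a sum of `m` squares, and Lagrange's four-square theorem provides one.
-/

open Matrix

namespace Matrix

theorem mul_mul_eq_mul_mul_of_rank_le_one {m n R : Type*} [Fintype n] [CommRing R] [IsDomain R]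
    {A : Matrix m n R} (hA : A.rank ≤ 1) (i k : m) (j l : n) :
    A i j * A k l = A i l * A k j := by
  by_contra h
  have hdet : (A.submatrix ![i, k] ![j, l]).det ∈ nonZeroDivisors R := by
    rw [mem_nonZeroDivisors_iff_ne_zero, det_fin_two]
    simpa [sub_eq_zero] using h
  have := (rank_of_det_mem_nonZeroDivisors hdet).symm.trans_le
    ((rank_submatrix_le _ _ _).trans hA)
  simp at this

theorem vecMulVec_mul_transpose {m n R : Type*} [Fintype n] [CommSemiring R] (b : m → R)
    (t : n → R) : vecMulVec b t * (vecMulVec b t)ᵀ = (t ⬝ᵥ t) • vecMulVec b b := by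
  rw [transpose_vecMulVec, vecMulVec_mul, vecMul_vecMulVec, vecMulVec_smul]

theorem mul_eq_mul_of_mul_transpose_eq_smul_vecMulVec {m n R : Type*} [Fintype n] [CommRing R]
    [LinearOrder R] [IsStrictOrderedRing R] {V : Matrix m n R} {d : R} {b : m → R}
    (h : V * Vᵀ = d • vecMulVec b b) (i j : m) (k : n) : b j * V i k = b i * V j k := by
  have hrow : ∀ i j, V i ⬝ᵥ V j = d * (b i * b j) := fun i j => congrFun (congrFun h i) j
  have hw : (b j • V i - b i • V j) ⬝ᵥ (b j • V i - b i • V j) = 0 := by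
    simp only [sub_dotProduct, dotProduct_sub, smul_dotProduct, dotProduct_smul, hrow, smul_eq_mul]
    ring
  simpa [sub_eq_zero] using congrFun (dotProduct_self_eq_zero.mp hw) k

end Matrix

open Finset

theorem Finset.gcd_gcd_mul {α β γ : Type*} [CommMonoidWithZero α] [StrongNormalizedGCDMonoid α]
    (s : Finset β) (t : Finset γ) (f : β → α) (g : γ → α) :
    (s.gcd fun i => t.gcd fun j => f i * g j) = s.gcd f * t.gcd g := by
  have hnorm : (s.gcd fun i => normalize (f i)) = s.gcd f :=
    dvd_antisymm_of_normalize_eq normalize_gcd normalize_gcd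
      (dvd_gcd fun i hi => (gcd_dvd hi).trans (normalize_dvd_iff.mpr dvd_rfl))
      (dvd_gcd fun i hi => dvd_normalize_iff.mpr (gcd_dvd hi))
  simp_rw [gcd_mul_left, gcd_mul_right, normalize_gcd, hnorm]

theorem Int.exists_nonneg_sum_four_sq {d : ℤ} (hd : 0 ≤ d) :
    ∃ f : Fin 4 → ℤ, (∀ i, 0 ≤ f i) ∧ d = ∑ i, f i ^ 2 := by
  lift d to ℕ using hd
  obtain ⟨a, b, c, e, h⟩ := Nat.sum_four_squares d
  refine ⟨![a, b, c, e], fun i => by fin_cases i <;> simp, ?_⟩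
  simp [Fin.sum_univ_four, ← h]

theorem exists_eq_vecMulVec_of_mul_transpose_eq {m n : Type*} [Fintype m] [Fintype n]
    {V : Matrix m n ℤ} (hV : ∀ i k, 0 ≤ V i k) {d : ℤ} {b : m → ℤ}
    (hb : ∀ i, 0 ≤ b i) (hb1 : univ.gcd b = 1) (h : V * Vᵀ = d • vecMulVec b b) :
    ∃ t : n → ℤ, (∀ k, 0 ≤ t k) ∧ V = vecMulVec b t := by
  refine ⟨fun k => univ.gcd fun i => V i k,
    fun k => Int.nonneg_of_normalize_eq_self normalize_gcd, Matrix.ext fun i k => ?_⟩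
  calc V i k = univ.gcd fun j => b j * V i k := by
        rw [Finset.gcd_mul_right, hb1, one_mul, Int.normalize_of_nonneg (hV i k)]
    _ = univ.gcd fun j => b i * V j k :=
        gcd_congr rfl fun j _ => mul_eq_mul_of_mul_transpose_eq_smul_vecMulVec h i j k
    _ = _ := by rw [Finset.gcd_mul_left, Int.normalize_of_nonneg (hb i), vecMulVec_apply]

section SquareMatrix

variable {ι : Type*} [Fintype ι]

theorem gcd_entries_eq_gcd_diag {A : Matrix ι ι ℤ} (hsq : ∀ i j, A i j ^ 2 = A i i * A j j) :
    (univ.gcd fun i => univ.gcd fun j => A i j) = univ.gcd fun i => A i i := by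
  refine dvd_antisymm_of_normalize_eq normalize_gcd normalize_gcd
    (dvd_gcd fun i _ => (gcd_dvd (mem_univ i)).trans (gcd_dvd (mem_univ i)))
    (dvd_gcd fun i _ => dvd_gcd fun j _ => ?_)
  rw [← Int.pow_dvd_pow_iff two_ne_zero, hsq, sq]
  exact mul_dvd_mul (gcd_dvd (mem_univ i)) (gcd_dvd (mem_univ j))

theorem exists_primitive_eq_smul_vecMulVec {A : Matrix ι ι ℤ} (hnn : ∀ i j, 0 ≤ A i j)
    (hA : A.IsSymm) (hminor : ∀ i j k l, A i j * A k l = A i l * A k j) (hA0 : A ≠ 0) :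
    ∃ b : ι → ℤ, (∀ i, 0 ≤ b i) ∧ univ.gcd b = 1 ∧
      A = (univ.gcd fun i => A i i) • vecMulVec b b := by
  have hsq : ∀ i j, A i j ^ 2 = A i i * A j j := fun i j => by
    rw [sq, ← hminor i j j i, hA.apply i j]
  obtain ⟨i₀, hi₀⟩ : ∃ i, A i i ≠ 0 := by
    by_contra! h
    exact hA0 (Matrix.ext fun i j => pow_eq_zero_iff two_ne_zero |>.mp (by simp [hsq, h]))
  set D := A i₀ i₀
  have hD : 0 < D := (hnn i₀ i₀).lt_of_ne' hi₀
  set c : ι → ℤ := fun i => A i i₀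
  have hAD : ∀ i j, A i j * D = c i * c j := fun i j => by
    rw [hminor i j i₀ i₀, hA.apply j i₀]
  obtain ⟨b, hcb, hb1⟩ := univ.extract_gcd c ⟨i₀, mem_univ i₀⟩
  set γ := univ.gcd c
  -- Compare the gcds of all entries on the two sides of `A * D = c cᵀ`.
  have key : γ * γ = (univ.gcd fun i => A i i) * D := by
    calc γ * γ = univ.gcd fun i => univ.gcd fun j => c i * c j := (gcd_gcd_mul _ _ _ _).symm
      _ = univ.gcd fun i => univ.gcd fun j => A i j * D :=
        gcd_congr rfl fun i _ => gcd_congr rfl fun j _ => (hAD i j).symm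
      _ = univ.gcd fun i => univ.gcd (fun j => A i j) * D :=
        gcd_congr rfl fun i _ => by rw [Finset.gcd_mul_right, Int.normalize_of_nonneg hD.le]
      _ = _ := by
        rw [Finset.gcd_mul_right, Int.normalize_of_nonneg hD.le, gcd_entries_eq_gcd_diag hsq]
  have hγ : 0 < γ := by
    refine (Int.nonneg_of_normalize_eq_self normalize_gcd).lt_of_ne' fun h => hi₀ ?_
    exact gcd_eq_zero_iff.mp h i₀ (mem_univ i₀)
  refine ⟨b, fun i => ?_, hb1, Matrix.ext fun i j => mul_right_cancel₀ hD.ne' ?_⟩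
  · exact (mul_nonneg_iff_of_pos_left hγ).mp (hcb i (mem_univ i) ▸ hnn i i₀)
  · rw [hAD, hcb i (mem_univ i), hcb j (mem_univ j), Matrix.smul_apply, vecMulVec_apply,
      smul_eq_mul]
    linear_combination (b i * b j) * key

theorem setOf_exists_mul_transpose_eq_smul_vecMulVec {b : ι → ℤ} (hb : ∀ i, 0 ≤ b i)
    (hb1 : univ.gcd b = 1) (d : ℤ) :
    {m : ℕ | ∃ V : Matrix ι (Fin m) ℤ,
        (∀ i j, 0 ≤ V i j) ∧ d • vecMulVec b b = V * Vᵀ} =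
      {s : ℕ | ∃ f : Fin s → ℤ, (∀ i, 0 ≤ f i) ∧ d = ∑ i, f i ^ 2} := by
  have hbb : vecMulVec b b ≠ 0 := by
    have hb0 : b ≠ 0 := by
      rintro rfl
      exact one_ne_zero (hb1.symm.trans (gcd_eq_zero_iff.mpr fun _ _ => rfl))
    exact vecMulVec_ne_zero hb0 hb0
  ext m
  constructor
  · rintro ⟨V, hV, h⟩
    obtain ⟨t, ht, rfl⟩ := exists_eq_vecMulVec_of_mul_transpose_eq hV hb hb1 h.symm
    rw [vecMulVec_mul_transpose] at h
    refine ⟨t, ht, ?_⟩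
    simpa [dotProduct, sq] using smul_left_injective ℤ hbb h
  · rintro ⟨f, hf, rfl⟩
    refine ⟨vecMulVec b f, fun i k => mul_nonneg (hb i) (hf k), ?_⟩
    simp only [vecMulVec_mul_transpose, dotProduct, sq]

end SquareMatrix

theorem rank_one_int_cp (n : ℕ) (A : Matrix (Fin n) (Fin n) ℤ)
    (hnn : ∀ i j, 0 ≤ A i j)
    (hpsd : Matrix.PosSemidef (A.map ((↑) : ℤ → ℝ)))
    (hrk : Matrix.rank (A.map ((↑) : ℤ → ℝ)) = 1) :
    (∃ (m : ℕ) (V : Matrix (Fin n) (Fin m) ℤ),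
        (∀ i j, 0 ≤ V i j) ∧ A = V * Vᵀ) ∧
    sInf {m : ℕ | ∃ V : Matrix (Fin n) (Fin m) ℤ,
        (∀ i j, 0 ≤ V i j) ∧ A = V * Vᵀ} =
      sInf {s : ℕ | ∃ f : Fin s → ℤ, (∀ i, 0 ≤ f i) ∧
        (Finset.univ.gcd fun i => A i i) = ∑ i, f i ^ 2} := by
  have hsymm : A.IsSymm :=
    (isSymm_map_iff Int.cast_injective).mp (isHermitian_iff_isSymm.mp hpsd.isHermitian)
  have hminor : ∀ i j k l, A i j * A k l = A i l * A k j := fun i j k l => by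
    exact_mod_cast (by simpa using mul_mul_eq_mul_mul_of_rank_le_one hrk.le i k j l :
      (A i j * A k l : ℝ) = A i l * A k j)
  have hA0 : A ≠ 0 := by
    rintro rfl
    simp at hrk
  obtain ⟨b, hb, hb1, hAb⟩ := exists_primitive_eq_smul_vecMulVec hnn hsymm hminor hA0
  have hsets := setOf_exists_mul_transpose_eq_smul_vecMulVec hb hb1 (univ.gcd fun i => A i i)
  rw [← hAb] at hsets
  refine ⟨?_, congrArg sInf hsets⟩
  obtain ⟨f, hf, hsum⟩ := Int.exists_nonneg_sum_four_sq (d := univ.gcd fun i => A i i)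
    (Int.nonneg_of_normalize_eq_self normalize_gcd)
  exact ⟨4, (Set.ext_iff.mp hsets 4).mpr ⟨f, hf, hsum⟩⟩
end

section
/- Let A = [[a, b], [b, c]] be a 2×2 integer matrix with nonnegative entries and nonnegative determinant, with c > 0 and b > c. Write b = αc + b₀ with α ≥ 1 an integer and 0 ≤ b₀ < c. Then the matrix A₀ = S A S^T, where S = [[1, -α], [0, 1]], is again an integer matrix with nonnegative entries and nonnegative determinant, and has entries A₀ = [[a - 2αb + α²c, b - αc], [b - αc, c]]. -/
/-! Conjugation by the shear `S = [[1, -α], [0, 1]]` replaces `b` by `b - αc` and preserves the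
determinant, since `det S = 1`. The new off-diagonal entry `b - αc = b₀` is nonnegative by the choice of
`α`, and the new corner entry `a₀` is nonnegative because `a₀ c = det A + b₀² ≥ 0` with `c > 0`. -/

open Matrix

section Shear

variable {R : Type*} [CommRing R]

def shear (α : R) : Matrix (Fin 2) (Fin 2) R := !![1, -α; 0, 1]

@[simp]
theorem det_shear (α : R) : (shear α).det = 1 := by
  simp [shear, det_fin_two_of]

theorem det_shear_mul_mul_transpose (α : R) (A : Matrix (Fin 2) (Fin 2) R) :
    (shear α * A * (shear α)ᵀ).det = A.det := by
  rw [det_mul, det_mul, det_transpose, det_shear, one_mul, mul_one]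

theorem shear_mul_mul_transpose (a b c α : R) :
    shear α * !![a, b; b, c] * (shear α)ᵀ =
      !![a - 2 * α * b + α ^ 2 * c, b - α * c; b - α * c, c] := by
  ext i j
  fin_cases i <;> fin_cases j <;> simp [shear, mul_apply, Fin.sum_univ_two] <;> ring

theorem shear_reduced_det (a b c α : R) :
    (a - 2 * α * b + α ^ 2 * c) * c - (b - α * c) ^ 2 = a * c - b ^ 2 := by
  have h := det_shear_mul_mul_transpose α !![a, b; b, c]
  rw [shear_mul_mul_transpose, det_fin_two_of, det_fin_two_of] at h
  linear_combination h

end Shear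

theorem nonneg_of_mul_sub_sq_nonneg {R : Type*} [CommRing R] [LinearOrder R] [IsStrictOrderedRing R]
    {x y c : R} (hc : 0 < c) (h : 0 ≤ x * c - y ^ 2) : 0 ≤ x :=
  nonneg_of_mul_nonneg_left (by linarith [sq_nonneg y]) hc

theorem reduction_step_general (a b c α b₀ : ℤ)
    (hc : 0 < c)
    (hdet : 0 ≤ a * c - b ^ 2)
    (hb0 : b = α * c + b₀) (hb0nn : 0 ≤ b₀) :
    !![(1 : ℤ), -α; 0, 1] * !![a, b; b, c] * (!![(1 : ℤ), -α; 0, 1])ᵀ =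
      !![a - 2 * α * b + α ^ 2 * c, b - α * c; b - α * c, c] ∧
    (0 ≤ a - 2 * α * b + α ^ 2 * c ∧ 0 ≤ b - α * c ∧ 0 ≤ c) ∧
    0 ≤ (a - 2 * α * b + α ^ 2 * c) * c - (b - α * c) ^ 2 := by
  have hdet₀ : 0 ≤ (a - 2 * α * b + α ^ 2 * c) * c - (b - α * c) ^ 2 := by
    rwa [shear_reduced_det]
  exact ⟨shear_mul_mul_transpose a b c α,
    ⟨nonneg_of_mul_sub_sq_nonneg hc hdet₀, by linarith, hc.le⟩, hdet₀⟩

theorem reduction_step (a b c α b₀ : ℤ)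
    (ha : 0 ≤ a) (hb : 0 ≤ b) (hc : 0 < c) (hbc : c < b)
    (hdet : 0 ≤ a * c - b ^ 2)
    (hα : 1 ≤ α) (hb0 : b = α * c + b₀) (hb0nn : 0 ≤ b₀) (hb0lt : b₀ < c) :
    !![(1 : ℤ), -α; 0, 1] * !![a, b; b, c] * (!![(1 : ℤ), -α; 0, 1])ᵀ =
      !![a - 2 * α * b + α ^ 2 * c, b - α * c; b - α * c, c] ∧
    (0 ≤ a - 2 * α * b + α ^ 2 * c ∧ 0 ≤ b - α * c ∧ 0 ≤ c) ∧
    0 ≤ (a - 2 * α * b + α ^ 2 * c) * c - (b - α * c) ^ 2 :=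
  reduction_step_general a b c α b₀ hc hdet hb0 hb0nn
end

section
/- Every 2×2 integer doubly nonnegative matrix A = [[a,b],[b,c]] with a ≥ b and c ≥ b admits an integer cp-factorization with at most 12 columns, via the decomposition A = b·[[1,1],[1,1]] + (a-b)·E₁₁ + (c-b)·E₂₂. -/
/-!
Each of the three summands `b • J`, `(a - b) • E₁₁`, `(c - b) • E₂₂` is a nonnegative multiple of
`u uᵀ` for a nonnegative vector `u`. Writing the multiple as `w ⬝ᵥ w` with `w ≥ 0` in `ℤ⁴`
(Lagrange), the summand is `(u wᵀ)(u wᵀ)ᵀ`, a nonnegative factorization with 4 columns;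
placing the three factors side by side gives 12 columns.
-/

open Matrix

namespace Matrix

variable {n R : Type*} [CommSemiring R] [PartialOrder R]

def HasNonnegFactorization (A : Matrix n n R) (m : ℕ) : Prop :=
  ∃ V : Matrix n (Fin m) R, (∀ i j, 0 ≤ V i j) ∧ A = V * Vᵀ

theorem HasNonnegFactorization.add {A B : Matrix n n R} {k l : ℕ}
    (hA : A.HasNonnegFactorization k) (hB : B.HasNonnegFactorization l) :
    (A + B).HasNonnegFactorization (k + l) := by
  obtain ⟨V, hV, rfl⟩ := hA
  obtain ⟨W, hW, rfl⟩ := hB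
  have hVW : ∀ i j, 0 ≤ fromCols V W i j := by
    rintro i (j | j)
    exacts [hV i j, hW i j]
  refine ⟨(fromCols V W).submatrix id finSumFinEquiv.symm, fun i j => hVW i _, ?_⟩
  rw [transpose_submatrix, submatrix_mul_equiv, submatrix_id_id, transpose_fromCols,
    fromCols_mul_fromRows]

theorem hasNonnegFactorization_smul_vecMulVec [IsOrderedRing R] {m : ℕ} {u : n → R}
    {w : Fin m → R} (hu : ∀ i, 0 ≤ u i) (hw : ∀ j, 0 ≤ w j) :
    ((w ⬝ᵥ w) • vecMulVec u u).HasNonnegFactorization m :=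
  ⟨vecMulVec u w, fun i j => mul_nonneg (hu i) (hw j), by
    rw [transpose_vecMulVec, vecMulVec_mul_vecMulVec, vecMulVec_smul]⟩

end Matrix

theorem Int.exists_nonneg_dotProduct_self_eq {n : ℤ} (hn : 0 ≤ n) :
    ∃ w : Fin 4 → ℤ, (∀ j, 0 ≤ w j) ∧ w ⬝ᵥ w = n := by
  obtain ⟨p, q, r, s, h⟩ := Nat.sum_four_squares n.toNat
  refine ⟨![p, q, r, s], fun j => by fin_cases j <;> simp, ?_⟩
  rw [← Int.toNat_of_nonneg hn, ← h]
  simp [dotProduct, Fin.sum_univ_four, sq]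

theorem cp_twelve_ordered_general (a b c : ℤ)
    (hb : 0 ≤ b) (hab : b ≤ a) (hcb : b ≤ c) :
    !![a, b; b, c] =
      b • !![(1 : ℤ), 1; 1, 1] + (a - b) • !![(1 : ℤ), 0; 0, 0]
        + (c - b) • !![(0 : ℤ), 0; 0, 1] ∧
    ∃ (m : ℕ), m ≤ 12 ∧ ∃ V : Matrix (Fin 2) (Fin m) ℤ,
      (∀ i j, 0 ≤ V i j) ∧ !![a, b; b, c] = V * Vᵀ := by
  have hdecomp : !![a, b; b, c] =
      b • !![(1 : ℤ), 1; 1, 1] + (a - b) • !![(1 : ℤ), 0; 0, 0]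
        + (c - b) • !![(0 : ℤ), 0; 0, 1] := by
    ext i j
    fin_cases i <;> fin_cases j <;> simp
  refine ⟨hdecomp, 12, le_rfl, ?_⟩
  obtain ⟨p, hp, hpb⟩ := Int.exists_nonneg_dotProduct_self_eq hb
  obtain ⟨q, hq, hqa⟩ := Int.exists_nonneg_dotProduct_self_eq (sub_nonneg.mpr hab)
  obtain ⟨r, hr, hrc⟩ := Int.exists_nonneg_dotProduct_self_eq (sub_nonneg.mpr hcb)
  have hJ : vecMulVec ![1, 1] ![1, 1] = !![(1 : ℤ), 1; 1, 1] := by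
    ext i j; fin_cases i <;> fin_cases j <;> rfl
  have hE₁₁ : vecMulVec ![1, 0] ![1, 0] = !![(1 : ℤ), 0; 0, 0] := by
    ext i j; fin_cases i <;> fin_cases j <;> rfl
  have hE₂₂ : vecMulVec ![0, 1] ![0, 1] = !![(0 : ℤ), 0; 0, 1] := by
    ext i j; fin_cases i <;> fin_cases j <;> rfl
  have hJb := hasNonnegFactorization_smul_vecMulVec (u := ![1, 1]) (by simp) hp
  have hE₁₁a := hasNonnegFactorization_smul_vecMulVec (u := ![1, 0]) (by simp) hq
  have hE₂₂c := hasNonnegFactorization_smul_vecMulVec (u := ![0, 1]) (by simp) hr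
  rw [hpb, hJ] at hJb
  rw [hqa, hE₁₁] at hE₁₁a
  rw [hrc, hE₂₂] at hE₂₂c
  rw [hdecomp]
  exact (hJb.add hE₁₁a).add hE₂₂c

theorem cp_twelve_ordered (a b c : ℤ)
    (hb : 0 ≤ b) (hab : b ≤ a) (hcb : b ≤ c) (hdet : b ^ 2 ≤ a * c) :
    !![a, b; b, c] =
      b • !![(1 : ℤ), 1; 1, 1] + (a - b) • !![(1 : ℤ), 0; 0, 0]
        + (c - b) • !![(0 : ℤ), 0; 0, 1] ∧
    ∃ (m : ℕ), m ≤ 12 ∧ ∃ V : Matrix (Fin 2) (Fin m) ℤ,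
      (∀ i j, 0 ≤ V i j) ∧ !![a, b; b, c] = V * Vᵀ :=
  cp_twelve_ordered_general a b c hb hab hcb
end

section
/- Every 2×2 integer doubly nonnegative matrix has an integer cp-factorization, and its integer cp-rank is at most 12. -/
/-! If `b ≤ a` and `b ≤ c`, then `!![a, b; b, c]` is `b` times the all-ones matrix plus
`(a - b) E₁₁ + (c - b) E₂₂`; writing each of the three nonnegative coefficients as a sum of four
squares gives twelve nonnegative integer columns. Otherwise, say `0 ≤ a < b`, so that `a > 0`:
conjugating `!![a, b - a; b - a, c - 2b + a]` by the nonnegative shear `!![1, 0; 1, 1]` gives back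
the original matrix, and this smaller matrix is again doubly nonnegative (same determinant) with
a smaller off-diagonal entry. The descent is Euclid's algorithm on the off-diagonal entry. -/

open Matrix

theorem Matrix.transpose_fin_two {α : Type*} (a b c d : α) : !![a, b; c, d]ᵀ = !![a, c; b, d] := by
  ext i j; fin_cases i <;> fin_cases j <;> rfl

def HasCPFactorization {R n : Type*} [Semiring R] [PartialOrder R] (m : ℕ) (A : Matrix n n R) :
    Prop :=
  ∃ V : Matrix n (Fin m) R, (∀ i j, 0 ≤ V i j) ∧ A = V * Vᵀ

namespace HasCPFactorization

variable {R n n' : Type*} [CommSemiring R] [PartialOrder R] {m k : ℕ} {A B : Matrix n n R}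

theorem add (hA : HasCPFactorization m A) (hB : HasCPFactorization k B) :
    HasCPFactorization (m + k) (A + B) := by
  obtain ⟨V, hV, rfl⟩ := hA
  obtain ⟨W, hW, rfl⟩ := hB
  refine ⟨(fromCols V W).submatrix id finSumFinEquiv.symm, ?_, ?_⟩
  · intro i j
    rcases finSumFinEquiv.surjective j with ⟨l | l, rfl⟩ <;> simp [hV, hW]
  · rw [transpose_submatrix, submatrix_mul_equiv _ _ _ finSumFinEquiv.symm, transpose_fromCols,
      fromCols_mul_fromRows, submatrix_id_id]

theorem conj [IsOrderedRing R] [Fintype n] (h : HasCPFactorization m A) {S : Matrix n' n R}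
    (hS : ∀ i j, 0 ≤ S i j) : HasCPFactorization m (S * A * Sᵀ) := by
  obtain ⟨V, hV, rfl⟩ := h
  refine ⟨S * V, fun i j => Finset.sum_nonneg fun l _ => mul_nonneg (hS i l) (hV l j), ?_⟩
  simp only [transpose_mul, Matrix.mul_assoc]

end HasCPFactorization

theorem hasCPFactorization_smul_vecMulVec {n : Type*} {u : n → ℤ} (hu : ∀ i, 0 ≤ u i) {s : ℤ}
    (hs : 0 ≤ s) : HasCPFactorization 4 (s • vecMulVec u u) := by
  lift s to ℕ using hs
  obtain ⟨p, q, r, t, hsum⟩ := Nat.sum_four_squares s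
  refine ⟨vecMulVec u ![p, q, r, t], fun i j => mul_nonneg (hu i) (by fin_cases j <;> simp), ?_⟩
  rw [transpose_vecMulVec, vecMulVec_mul_vecMulVec, vecMulVec_smul, ← hsum]
  congr 1
  simp [dotProduct, Fin.sum_univ_four, sq]

theorem hasCPFactorization_twelve_of_le_of_le {a b c : ℤ} (hb : 0 ≤ b) (hba : b ≤ a)
    (hbc : b ≤ c) : HasCPFactorization 12 !![a, b; b, c] := by
  have hsplit : !![a, b; b, c] = b • vecMulVec ![1, 1] ![1, 1]
      + (a - b) • vecMulVec ![1, 0] ![1, 0] + (c - b) • vecMulVec ![0, 1] ![0, 1] := by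
    ext i j; fin_cases i <;> fin_cases j <;> simp
  have hone : ∀ i, (0 : ℤ) ≤ ![1, 1] i := by simp [Fin.forall_fin_two]
  have he₁ : ∀ i, (0 : ℤ) ≤ ![1, 0] i := by simp [Fin.forall_fin_two]
  have he₂ : ∀ i, (0 : ℤ) ≤ ![0, 1] i := by simp [Fin.forall_fin_two]
  rw [hsplit]
  exact ((hasCPFactorization_smul_vecMulVec hone hb).add
    (hasCPFactorization_smul_vecMulVec he₁ (sub_nonneg.2 hba))).add
    (hasCPFactorization_smul_vecMulVec he₂ (sub_nonneg.2 hbc))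

theorem HasCPFactorization.of_swap {m : ℕ} {a b c : ℤ} (h : HasCPFactorization m !![c, b; b, a]) :
    HasCPFactorization m !![a, b; b, c] := by
  have hswap : !![a, b; b, c] = !![0, 1; 1, 0] * !![c, b; b, a] * !![0, 1; 1, 0]ᵀ := by
    rw [transpose_fin_two, mul_fin_two, mul_fin_two]; ring_nf
  rw [hswap]
  exact h.conj (by simp [Fin.forall_fin_two])

theorem HasCPFactorization.of_shear {m : ℕ} {a b c : ℤ}
    (h : HasCPFactorization m !![a, b - a; b - a, c - 2 * b + a]) :
    HasCPFactorization m !![a, b; b, c] := by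
  have hshear : !![a, b; b, c]
      = !![1, 0; 1, 1] * !![a, b - a; b - a, c - 2 * b + a] * !![1, 0; 1, 1]ᵀ := by
    rw [transpose_fin_two, mul_fin_two, mul_fin_two]; ring_nf
  rw [hshear]
  exact h.conj (by simp [Fin.forall_fin_two])

theorem pos_of_lt_of_sq_le_mul {a b c : ℤ} (ha : 0 ≤ a) (hab : a < b) (hdet : b ^ 2 ≤ a * c) :
    0 < a :=
  lt_of_le_of_ne ha fun h => by subst h; nlinarith

theorem shear_nonneg_of_lt {a b c : ℤ} (ha : 0 ≤ a) (hab : a < b) (hdet : b ^ 2 ≤ a * c) :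
    0 ≤ c - 2 * b + a ∧ (b - a) ^ 2 ≤ a * (c - 2 * b + a) := by
  have hdet' : (b - a) ^ 2 ≤ a * (c - 2 * b + a) := by linarith
  exact ⟨nonneg_of_mul_nonneg_right (by nlinarith) (pos_of_lt_of_sq_le_mul ha hab hdet), hdet'⟩

theorem hasCPFactorization_twelve {a b c : ℤ} (ha : 0 ≤ a) (hb : 0 ≤ b) (hc : 0 ≤ c)
    (hdet : b ^ 2 ≤ a * c) : HasCPFactorization 12 !![a, b; b, c] := by
  rcases le_or_gt b a with hba | hab
  · rcases le_or_gt b c with hbc | hcb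
    · exact hasCPFactorization_twelve_of_le_of_le hb hba hbc
    · have hdet_swap : b ^ 2 ≤ c * a := by linarith
      -- `hc_pos` is what the termination check needs: `(b - c).toNat < b.toNat`.
      have hc_pos := pos_of_lt_of_sq_le_mul hc hcb hdet_swap
      obtain ⟨ha', hdet'⟩ := shear_nonneg_of_lt hc hcb hdet_swap
      exact (hasCPFactorization_twelve hc (by omega) ha' hdet').of_shear.of_swap
  · have ha_pos := pos_of_lt_of_sq_le_mul ha hab hdet
    obtain ⟨hc', hdet'⟩ := shear_nonneg_of_lt ha hab hdet
    exact (hasCPFactorization_twelve ha (by omega) hc' hdet').of_shear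
termination_by b.toNat

theorem cp_rank_le_twelve (a b c : ℤ)
    (ha : 0 ≤ a) (hb : 0 ≤ b) (hc : 0 ≤ c) (hdet : b ^ 2 ≤ a * c) :
    ∃ (m : ℕ), m ≤ 12 ∧ ∃ V : Matrix (Fin 2) (Fin m) ℤ,
      (∀ i j, 0 ≤ V i j) ∧ !![a, b; b, c] = V * Vᵀ :=
  ⟨12, le_rfl, hasCPFactorization_twelve ha hb hc hdet⟩
end

section
/- Let A = [[a,b],[b,c]] be an integer doubly nonnegative matrix with a ≥ b, c ≥ b, b ≥ 7, and a - b ≡ 7 (mod 8), c - b ≡ 7 (mod 8), with b of the form 4^r(8k+7). Then A has integer cp-rank at most 10, via the decomposition A = diag(a-b-1, c-b+2) + (b-2)[[1,1],[1,1]] + (1,2)^T(1,2). -/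
/-!
Write `a = b + D` and `c = b + E` with `D ≤ E`. By Lagrange's four-square theorem each of
`n • !![1, 1; 1, 1]`, `n • !![1, 0; 0, 0]` and `n • !![0, 0; 0, 1]` is `V Vᵀ` for a nonnegative
integer `V` with four columns, so it is enough to find two more columns `(x₁, y₁)`, `(x₂, y₂)`
leaving nonnegative remainders. With `q = ⌊√D⌋`: if `b ≤ 2q + 1`, the columns `(2, ⌊b/2⌋)` and
`(1, b mod 2)` fit between two diagonal blocks; otherwise `(q + 1, y₁)` and `(1, y₂)` with
`y₁ ≤ 1` make the `(1,1)` entry exact on top of a block `n • !![1, 1; 1, 1]`.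
-/

open Matrix

def IsNatGram (m a b c : ℕ) : Prop :=
  ∃ v w : Fin m → ℕ, v ⬝ᵥ v = a ∧ v ⬝ᵥ w = b ∧ w ⬝ᵥ w = c

namespace IsNatGram

variable {m n a b c a' b' c' : ℕ}

theorem swap (h : IsNatGram m a b c) : IsNatGram m c b a :=
  let ⟨v, w, hv, hvw, hw⟩ := h
  ⟨w, v, hw, dotProduct_comm w v ▸ hvw, hv⟩

theorem append (h : IsNatGram m a b c) (h' : IsNatGram n a' b' c') :
    IsNatGram (m + n) (a + a') (b + b') (c + c') := by
  obtain ⟨v, w, rfl, rfl, rfl⟩ := h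
  obtain ⟨v', w', rfl, rfl, rfl⟩ := h'
  refine ⟨Fin.append v v', Fin.append w w', ?_, ?_, ?_⟩ <;>
    simp [dotProduct, Fin.sum_univ_add]

theorem scale (h : IsNatGram m a b c) (α β : ℕ) :
    IsNatGram m (α ^ 2 * a) (α * β * b) (β ^ 2 * c) := by
  obtain ⟨v, w, rfl, rfl, rfl⟩ := h
  refine ⟨α • v, β • w, ?_, ?_, ?_⟩ <;>
    simp only [smul_dotProduct, dotProduct_smul, smul_eq_mul] <;> ring

theorem exists_nonneg_factor (h : IsNatGram m a b c) :
    ∃ V : Matrix (Fin 2) (Fin m) ℤ, (∀ i j, 0 ≤ V i j) ∧ !![(a : ℤ), b; b, c] = V * Vᵀ := by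
  obtain ⟨v, w, rfl, rfl, rfl⟩ := h
  refine ⟨(of ![v, w]).map (Nat.castRingHom ℤ), fun _ _ => Int.natCast_nonneg _, ?_⟩
  have hgram : of ![v, w] * (of ![v, w])ᵀ = !![v ⬝ᵥ v, v ⬝ᵥ w; w ⬝ᵥ v, w ⬝ᵥ w] := by
    ext i j; fin_cases i <;> fin_cases j <;> rfl
  rw [← transpose_map, ← Matrix.map_mul, hgram, dotProduct_comm w v]
  ext i j; fin_cases i <;> fin_cases j <;> rfl

end IsNatGram

theorem isNatGram_sq (x y : ℕ) : IsNatGram 1 (x ^ 2) (x * y) (y ^ 2) := by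
  simpa using (show IsNatGram 1 1 1 1 from ⟨1, 1, by simp⟩).scale x y

theorem isNatGram_four (n : ℕ) : IsNatGram 4 n n n := by
  obtain ⟨a, b, c, d, rfl⟩ := Nat.sum_four_squares n
  exact ⟨![a, b, c, d], ![a, b, c, d], by simp [dotProduct, Fin.sum_univ_succ, sq, add_assoc]⟩

theorem isNatGram_ten_of_mul_add_mul_eq {B D E x₁ y₁ x₂ y₂ : ℕ}
    (hB : x₁ * y₁ + x₂ * y₂ = B) (hD : x₁ ^ 2 + x₂ ^ 2 ≤ B + D) (hE : y₁ ^ 2 + y₂ ^ 2 ≤ B + E) :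
    IsNatGram 10 (B + D) B (B + E) := by
  obtain ⟨P, hP⟩ := Nat.exists_eq_add_of_le hD
  obtain ⟨M, hM⟩ := Nat.exists_eq_add_of_le hE
  have h := ((((isNatGram_four P).scale 1 0).append (isNatGram_sq x₁ y₁)).append
    (isNatGram_sq x₂ y₂)).append ((isNatGram_four M).scale 0 1)
  convert h using 1 <;> simp <;> omega

theorem isNatGram_ten_of_mul_add_mul_le {B D E x₁ y₁ x₂ y₂ : ℕ}
    (hB : x₁ * y₁ + x₂ * y₂ ≤ B) (hD : x₁ ^ 2 + x₂ ^ 2 = D + (x₁ * y₁ + x₂ * y₂))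
    (hE : y₁ ^ 2 + y₂ ^ 2 ≤ E + (x₁ * y₁ + x₂ * y₂)) :
    IsNatGram 10 (B + D) B (B + E) := by
  obtain ⟨N, hN⟩ := Nat.exists_eq_add_of_le' hB
  obtain ⟨M, hM⟩ := Nat.exists_eq_add_of_le hE
  have h := (((isNatGram_four N).append (isNatGram_sq x₁ y₁)).append
    (isNatGram_sq x₂ y₂)).append ((isNatGram_four M).scale 0 1)
  convert h using 1 <;> simp <;> omega

theorem isNatGram_ten_of_le_two_mul_sqrt_add_one {B D E : ℕ} (h5 : 5 ≤ B)
    (hB : B ≤ 2 * Nat.sqrt D + 1) (hDE : D ≤ E) : IsNatGram 10 (B + D) B (B + E) := by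
  have hk : (B / 2) ^ 2 ≤ D :=
    (Nat.pow_le_pow_left (by omega) 2).trans (Nat.sqrt_le' D)
  have he : (B % 2) ^ 2 ≤ 1 := by
    rcases Nat.mod_two_eq_zero_or_one B with h | h <;> simp [h]
  exact isNatGram_ten_of_mul_add_mul_eq (x₁ := 2) (x₂ := 1) (y₁ := B / 2) (y₂ := B % 2)
    (by omega) (by omega) (by omega)

theorem isNatGram_ten_of_sqrt_add_one_sq_lt {B D E : ℕ}
    (hB : (Nat.sqrt D + 1) ^ 2 < B + D) (hDE : D ≤ E) : IsNatGram 10 (B + D) B (B + E) := by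
  obtain ⟨R, hR⟩ : ∃ R, (Nat.sqrt D + 1) ^ 2 = D + R + 1 :=
    Nat.exists_eq_add_of_lt (Nat.lt_succ_sqrt' D)
  have hq := Nat.sqrt_le' D
  rcases le_or_gt (R + 1) (Nat.sqrt D) with hRq | hqR
  · refine isNatGram_ten_of_mul_add_mul_le (x₁ := Nat.sqrt D + 1) (x₂ := 1) (y₁ := 0)
      (y₂ := R + 2) (by omega) (by simp; omega) ?_
    nlinarith
  · obtain ⟨u, rfl⟩ := Nat.exists_eq_add_of_le (Nat.le_of_lt_succ hqR)
    refine isNatGram_ten_of_mul_add_mul_le (x₁ := Nat.sqrt D + 1) (x₂ := 1) (y₁ := 1)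
      (y₂ := u + 1) (by omega) (by simp; omega) ?_
    nlinarith

theorem isNatGram_ten {B D E : ℕ} (hB : 5 ≤ B) : IsNatGram 10 (B + D) B (B + E) := by
  wlog hDE : D ≤ E generalizing D E
  · exact (this (le_of_not_ge hDE)).swap
  rcases lt_or_ge ((Nat.sqrt D + 1) ^ 2) (B + D) with h | h
  · exact isNatGram_ten_of_sqrt_add_one_sq_lt h hDE
  · refine isNatGram_ten_of_le_two_mul_sqrt_add_one hB ?_ hDE
    nlinarith [Nat.sqrt_le' D]

theorem cp_rank_le_ten_case2_general (a b c : ℤ)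
    (hab : b ≤ a) (hcb : b ≤ c) (hb7 : 7 ≤ b) :
    ∃ (m : ℕ), m ≤ 10 ∧ ∃ V : Matrix (Fin 2) (Fin m) ℤ,
      (∀ i j, 0 ≤ V i j) ∧ !![a, b; b, c] = V * Vᵀ := by
  lift b to ℕ using by omega
  obtain ⟨D, rfl⟩ : ∃ D : ℕ, a = b + D := ⟨(a - b).toNat, by omega⟩
  obtain ⟨E, rfl⟩ : ∃ E : ℕ, c = b + E := ⟨(c - b).toNat, by omega⟩
  have hgram : IsNatGram 10 (b + D) b (b + E) := isNatGram_ten (by omega)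
  exact ⟨10, le_rfl, by exact_mod_cast hgram.exists_nonneg_factor⟩

theorem cp_rank_le_ten_case2 (a b c : ℤ)
    (hab : b ≤ a) (hcb : b ≤ c) (hb7 : 7 ≤ b)
    (hdet : b ^ 2 ≤ a * c)
    (hmoda : (a - b) % 8 = 7) (hmodc : (c - b) % 8 = 7)
    (hbform : ∃ r k : ℕ, b = 4 ^ r * (8 * k + 7)) :
    ∃ (m : ℕ), m ≤ 10 ∧ ∃ V : Matrix (Fin 2) (Fin m) ℤ,
      (∀ i j, 0 ≤ V i j) ∧ !![a, b; b, c] = V * Vᵀ :=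
  cp_rank_le_ten_case2_general a b c hab hcb hb7
end

section
/- Every 2×2 integer doubly nonnegative matrix has an integer cp-factorization with at most 11 columns; i.e., the integer cp-rank of any 2×2 integer doubly nonnegative matrix is at most 11. -/
/-!
Encode a factorization by its list of columns `(x, y) ∈ ℕ²`; then `V * Vᵀ` has entries `Σ x²`,
`Σ x y`, `Σ y²`. The shear `(x, y) ↦ (x, x + y)` turns a factorization of `(a, b - a, c - 2b + a)`
into one of `(a, b, c)` and preserves `ac - b²`, so by descent on `a + c` and symmetry it suffices
to treat `b < a ≤ c`. Write `b = s² + e` with `e ≤ 2s`. Either the columns `(s, s), (1, e)` give the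
off-diagonal entry `b` and diagonal entries at most `a` and `c`, and four columns for each diagonal
defect finish; or at most three columns with `x ≤ y` give `Σ y² - Σ x y = c - b` at a cost
`Σ x y ≤ b`, and four columns `(u, u)` for the off-diagonal defect plus four for the one left in
`a` finish. The four columns come from Lagrange's four-square theorem.
-/

open Matrix

lemma Nat.exists_eq_sqrt_mul_sqrt_add (n : ℕ) : ∃ r ≤ 2 * n.sqrt, n = n.sqrt * n.sqrt + r :=
  ⟨n - n.sqrt * n.sqrt, by have := n.sqrt_le_add; omega, by have := n.sqrt_le; omega⟩

namespace IntegerCP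

def gramEntries (L : List (ℕ × ℕ)) : ℕ × ℕ × ℕ :=
  (L.map fun q => (q.1 * q.1, q.1 * q.2, q.2 * q.2)).sum

@[simp] lemma gramEntries_nil : gramEntries [] = 0 := rfl

@[simp] lemma gramEntries_cons (q : ℕ × ℕ) (L : List (ℕ × ℕ)) :
    gramEntries (q :: L) = (q.1 * q.1, q.1 * q.2, q.2 * q.2) + gramEntries L := by
  simp [gramEntries]

@[simp] lemma gramEntries_append (L M : List (ℕ × ℕ)) :
    gramEntries (L ++ M) = gramEntries L + gramEntries M := by
  simp [gramEntries]

lemma gramEntries_map_swap (L : List (ℕ × ℕ)) :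
    gramEntries (L.map Prod.swap) =
      ((gramEntries L).2.2, (gramEntries L).2.1, (gramEntries L).1) := by
  induction L with
  | nil => rfl
  | cons q L ih => simp [ih, mul_comm]

lemma gramEntries_map_shear (L : List (ℕ × ℕ)) :
    gramEntries (L.map fun q => (q.1, q.1 + q.2)) =
      ((gramEntries L).1, (gramEntries L).1 + (gramEntries L).2.1,
        (gramEntries L).1 + 2 * (gramEntries L).2.1 + (gramEntries L).2.2) := by
  induction L with
  | nil => rfl
  | cons q L ih =>
    simp only [List.map_cons, gramEntries_cons, ih, Prod.fst_add, Prod.snd_add, Prod.mk_add_mk,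
      Prod.ext_iff, true_and]
    exact ⟨by ring, by ring⟩

lemma exists_length_eq_four_gramEntries_eq (n x y : ℕ) :
    ∃ L : List (ℕ × ℕ),
      L.length = 4 ∧ gramEntries L = (n * (x * x), n * (x * y), n * (y * y)) := by
  obtain ⟨p, q, r, t, h⟩ := Nat.sum_four_squares n
  refine ⟨[(p * x, p * y), (q * x, q * y), (r * x, r * y), (t * x, t * y)], rfl, ?_⟩
  simp only [gramEntries_cons, gramEntries_nil, add_zero, Prod.mk_add_mk, ← h, Prod.ext_iff]
  refine ⟨by ring, by ring, by ring⟩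

lemma exists_append_gramEntries_eq_of_le {L : List (ℕ × ℕ)} {x b y a c : ℕ}
    (hL : gramEntries L = (x, b, y)) (hxa : x ≤ a) (hyc : y ≤ c) :
    ∃ M, M.length ≤ 8 ∧ gramEntries (L ++ M) = (a, b, c) := by
  obtain ⟨X, hXl, hX⟩ := exists_length_eq_four_gramEntries_eq (a - x) 1 0
  obtain ⟨Y, hYl, hY⟩ := exists_length_eq_four_gramEntries_eq (c - y) 0 1
  refine ⟨X ++ Y, by simp [hXl, hYl], ?_⟩
  simp only [gramEntries_append, hL, hX, hY, Prod.mk_add_mk, Prod.ext_iff]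
  omega

lemma exists_append_gramEntries_eq_of_add_eq {L : List (ℕ × ℕ)} {x p y a b c : ℕ}
    (hL : gramEntries L = (x, p, y)) (hxp : x ≤ p) (hpb : p ≤ b) (hba : b ≤ a)
    (hyc : y + b = p + c) :
    ∃ M, M.length ≤ 8 ∧ gramEntries (L ++ M) = (a, b, c) := by
  obtain ⟨D, hDl, hD⟩ := exists_length_eq_four_gramEntries_eq (b - p) 1 1
  obtain ⟨X, hXl, hX⟩ := exists_length_eq_four_gramEntries_eq (a - (x + (b - p))) 1 0
  refine ⟨D ++ X, by simp [hDl, hXl], ?_⟩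
  simp only [gramEntries_append, hL, hD, hX, Prod.mk_add_mk, Prod.ext_iff]
  omega

/-- A column `(x, y)` with `x ≤ y` adds `y (y - x)` to `Σ y² - Σ x y` at the cost `x y`. Writing
`u = w² + r + 1` with `r ≤ 2w`, the columns `(0, w), (r, r + 1)` serve if `r ≤ w`, and
`(1, w + 1), (r - w, r - w + 1)` otherwise. -/
lemma exists_length_le_two_gramEntries_eq (u : ℕ) :
    ∃ (L : List (ℕ × ℕ)) (x p : ℕ),
      L.length ≤ 2 ∧ x ≤ p ∧ p ≤ u ∧ gramEntries L = (x, p, p + u) := by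
  rcases u with _ | n
  · exact ⟨[], 0, 0, by simp, le_rfl, le_rfl, rfl⟩
  obtain ⟨r, hr, hn⟩ := n.exists_eq_sqrt_mul_sqrt_add
  set w := n.sqrt
  rcases le_or_gt r w with hrw | hwr
  · refine ⟨[(0, w), (r, r + 1)], r * r, r * (r + 1), by simp, by nlinarith, ?_, ?_⟩
    · nlinarith [Nat.mul_le_mul hrw hrw]
    · simp only [gramEntries_cons, gramEntries_nil, mul_zero, zero_mul, add_zero, zero_add, hn,
        Prod.mk_add_mk, Prod.ext_iff, true_and]
      ring
  · obtain ⟨k, rfl⟩ : ∃ k, r = w + k := ⟨r - w, by omega⟩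
    refine ⟨[(1, w + 1), (k, k + 1)], 1 + k * k, w + 1 + k * (k + 1), by simp, by nlinarith,
      ?_, ?_⟩
    · nlinarith [Nat.mul_le_mul (show k ≤ w by omega) (show k ≤ w by omega)]
    · simp only [gramEntries_cons, gramEntries_nil, mul_one, one_mul, add_zero, hn,
        Prod.mk_add_mk, Prod.ext_iff, true_and]
      ring

lemma exists_length_le_three_gramEntries_eq (d : ℕ) :
    ∃ (L : List (ℕ × ℕ)) (x p : ℕ),
      L.length ≤ 3 ∧ x ≤ p ∧ p ≤ 2 * d.sqrt ∧ gramEntries L = (x, p, p + d) := by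
  obtain ⟨u, hu, hd⟩ := d.exists_eq_sqrt_mul_sqrt_add
  obtain ⟨L, x, p, hL, hxp, hpu, hg⟩ := exists_length_le_two_gramEntries_eq u
  refine ⟨(0, d.sqrt) :: L, x, p, by rw [List.length_cons]; omega, hxp, hpu.trans hu, ?_⟩
  simp only [gramEntries_cons, hg, mul_zero, zero_mul, zero_add, Prod.mk_add_mk, Prod.ext_iff,
    true_and]
  omega

lemma exists_length_le_eleven_gramEntries_eq_of_lt_of_le {a b c : ℕ} (hba : b < a)
    (hbc : b ≤ c) :
    ∃ L : List (ℕ × ℕ), L.length ≤ 11 ∧ gramEntries L = (a, b, c) := by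
  obtain ⟨d, rfl⟩ := Nat.exists_eq_add_of_le hbc
  obtain ⟨e, he, hb⟩ := b.exists_eq_sqrt_mul_sqrt_add
  generalize b.sqrt = s at he hb
  by_cases hed : e * e ≤ e + d
  · have hg : gramEntries [(s, s), (1, e)] = (s * s + 1, b, s * s + e * e) := by
      simp [hb]
    obtain ⟨M, hM, hgM⟩ := exists_append_gramEntries_eq_of_le hg (a := a) (c := b + d)
      (by omega) (by omega)
    exact ⟨_, by simp only [List.length_append, List.length_cons, List.length_nil]; omega, hgM⟩
  · obtain ⟨L, x, p, hL, hxp, hpd, hg⟩ := exists_length_le_three_gramEntries_eq d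
    -- `(√d)² ≤ d < e² - e`, hence `p ≤ 2√d ≤ 2e - 2 ≤ e + 2s - 2 < s² + e = b`
    have hde : d.sqrt < e := Nat.mul_self_lt_mul_self_iff.1 (by have := d.sqrt_le; omega)
    have hpb : p ≤ b := by nlinarith [two_mul_le_add_sq s 1]
    obtain ⟨M, hM, hgM⟩ := exists_append_gramEntries_eq_of_add_eq hg hxp hpb hba.le
      (c := b + d) (by omega)
    exact ⟨_, by rw [List.length_append]; omega, hgM⟩

theorem exists_length_le_eleven_gramEntries_eq {a b c : ℕ} (h : b * b ≤ a * c) :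
    ∃ L : List (ℕ × ℕ), L.length ≤ 11 ∧ gramEntries L = (a, b, c) := by
  induction hn : a + c using Nat.strong_induction_on generalizing a b c with
  | _ n ih =>
  rcases Nat.eq_zero_or_pos b with rfl | hb
  · obtain ⟨M, hM, hg⟩ := exists_append_gramEntries_eq_of_le (L := []) rfl (Nat.zero_le a)
      (Nat.zero_le c)
    exact ⟨M, by omega, hg⟩
  wlog hac : a ≤ c generalizing a c
  · obtain ⟨L, hL, hg⟩ :=
      this (a := c) (c := a) (by linarith [mul_comm a c]) (by omega) (by omega)
    exact ⟨L.map Prod.swap, by simpa, by simp [gramEntries_map_swap, hg]⟩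
  rcases lt_or_ge b a with hba | hab
  · exact exists_length_le_eleven_gramEntries_eq_of_lt_of_le hba (hba.le.trans hac)
  obtain ⟨b', rfl⟩ := Nat.exists_eq_add_of_le hab
  have ha : 0 < a := by nlinarith
  obtain ⟨c', rfl⟩ : ∃ c', c = a + 2 * b' + c' :=
    Nat.exists_eq_add_of_le (Nat.le_of_mul_le_mul_left (by nlinarith) ha)
  obtain ⟨L, hL, hg⟩ := ih (a + c') (by omega) (show b' * b' ≤ a * c' by nlinarith) rfl
  exact ⟨L.map fun q => (q.1, q.1 + q.2), by simpa, by simp [gramEntries_map_shear, hg]⟩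

def colMatrix (L : List (ℕ × ℕ)) : Matrix (Fin 2) (Fin L.length) ℕ :=
  Matrix.of ![fun j => L[j].1, fun j => L[j].2]

lemma colMatrix_mul_transpose {L : List (ℕ × ℕ)} {a b c : ℕ} (h : gramEntries L = (a, b, c)) :
    colMatrix L * (colMatrix L)ᵀ = !![a, b; b, c] := by
  rw [gramEntries, ← Fin.sum_univ_fun_getElem, Prod.ext_iff, Prod.ext_iff] at h
  simp only [Prod.fst_sum, Prod.snd_sum] at h
  obtain ⟨ha, hb, hc⟩ := h
  ext i j
  fin_cases i <;> fin_cases j <;> simp [mul_apply, colMatrix, ← ha, ← hb, ← hc, mul_comm]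

end IntegerCP

theorem cp_rank_le_eleven (a b c : ℤ)
    (ha : 0 ≤ a) (hb : 0 ≤ b) (hc : 0 ≤ c) (hdet : b ^ 2 ≤ a * c) :
    ∃ (m : ℕ), m ≤ 11 ∧ ∃ V : Matrix (Fin 2) (Fin m) ℤ,
      (∀ i j, 0 ≤ V i j) ∧ !![a, b; b, c] = V * Vᵀ := by
  lift a to ℕ using ha
  lift b to ℕ using hb
  lift c to ℕ using hc
  obtain ⟨L, hL, hg⟩ := IntegerCP.exists_length_le_eleven_gramEntries_eq
    (show b * b ≤ a * c by rw [sq] at hdet; exact_mod_cast hdet)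
  refine ⟨L.length, hL, (IntegerCP.colMatrix L).map (Nat.castRingHom ℤ), fun i j => by simp, ?_⟩
  rw [← transpose_map, ← Matrix.map_mul, IntegerCP.colMatrix_mul_transpose hg]
  simp [← Matrix.ext_iff, Fin.forall_fin_two]
end

section
/- Let A = [[a,1],[1,c]] with positive integers a, c and ac ≥ 1. In any integer cp-factorization A = V V^T, exactly one column of V equals (1,1)^T, and the integer cp-rank of A equals 1 + p + q, where p and q are the least numbers of squares representing a-1 and c-1 respectively. -/
/-!
The off-diagonal entry `1 = ∑ⱼ v₀ⱼ v₁ⱼ` is a sum of nonnegative integers, so exactly one column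
has both entries positive, and that column is `(1, 1)`. Every other column meets at most one of the
two rows, so the remaining columns split into two disjoint sets whose squares sum to `a - 1` and
`c - 1` respectively; this gives the lower bound `1 + p + q`. Conversely, the column `(1, 1)`
together with optimal square representations of `a - 1` and `c - 1`, placed in the first and the
second row respectively, is a factorization of that size.
-/

open Matrix

noncomputable def intCpRank (A : Matrix (Fin 2) (Fin 2) ℤ) : ℕ :=
  sInf {m : ℕ | ∃ V : Matrix (Fin 2) (Fin m) ℤ, (∀ i j, 0 ≤ V i j) ∧ A = V * Vᵀ}

open Finset

noncomputable def numSquares (n : ℤ) : ℕ :=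
  sInf {s : ℕ | ∃ f : Fin s → ℤ, n = ∑ i, f i ^ 2}

lemma exists_sum_sq_numSquares {n : ℤ} (hn : 0 ≤ n) :
    ∃ f : Fin (numSquares n) → ℤ, n = ∑ i, f i ^ 2 := by
  obtain ⟨w, x, y, z, h⟩ := Nat.sum_four_squares n.toNat
  have h4 : n = ∑ i, ![(w : ℤ), x, y, z] i ^ 2 := by
    rw [Fin.sum_univ_four, ← Int.toNat_of_nonneg hn, ← h]
    simp
  exact Nat.sInf_mem (s := {s : ℕ | ∃ f : Fin s → ℤ, n = ∑ i, f i ^ 2}) ⟨4, _, h4⟩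

lemma numSquares_sum_sq_le {ι : Type*} (s : Finset ι) (f : ι → ℤ) :
    numSquares (∑ i ∈ s, f i ^ 2) ≤ #s := by
  refine Nat.sInf_le ⟨fun k => f (s.equivFin.symm k), ?_⟩
  rw [← Finset.sum_coe_sort s, ← Equiv.sum_comp s.equivFin.symm]

lemma numSquares_sum_sq_sub_one_le {ι : Type*} [Fintype ι] [DecidableEq ι] (u : ι → ℤ) {j₀ : ι}
    (hj₀ : u j₀ = 1) :
    numSquares (∑ j, u j ^ 2 - 1) ≤ #{j ∈ univ.erase j₀ | u j ≠ 0} := by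
  have hsum : ∑ j, u j ^ 2 - 1 = ∑ j ∈ {j ∈ univ.erase j₀ | u j ≠ 0}, u j ^ 2 := by
    rw [Finset.sum_filter_of_ne (p := fun j => u j ≠ 0) fun j _ hj hu => hj (by simp [hu]),
      ← Finset.add_sum_erase _ _ (mem_univ j₀), hj₀]
    ring
  exact hsum ▸ numSquares_sum_sq_le _ u

lemma exists_eq_one_of_sum_mul_eq_one {ι : Type*} [Fintype ι] {u v : ι → ℤ}
    (hu : ∀ j, 0 ≤ u j) (hv : ∀ j, 0 ≤ v j) (h : ∑ j, u j * v j = 1) :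
    ∃ j₀, u j₀ = 1 ∧ v j₀ = 1 ∧ ∀ j ≠ j₀, u j * v j = 0 := by
  classical
  have hnonneg : ∀ j, 0 ≤ u j * v j := fun j => mul_nonneg (hu j) (hv j)
  obtain ⟨j₀, -, hj₀⟩ := Finset.exists_ne_zero_of_sum_ne_zero (h ▸ one_ne_zero)
  have hle : u j₀ * v j₀ ≤ 1 :=
    h ▸ Finset.single_le_sum (fun j _ => hnonneg j) (mem_univ j₀)
  have hone : u j₀ * v j₀ = 1 := le_antisymm hle (lt_of_le_of_ne (hnonneg j₀) hj₀.symm)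
  have hrest : ∑ j ∈ univ.erase j₀, u j * v j = 0 := by
    have := Finset.add_sum_erase univ (fun j => u j * v j) (mem_univ j₀)
    linarith
  obtain ⟨hu₀, hv₀⟩ | ⟨hu₀, -⟩ := Int.mul_eq_one_iff_eq_one_or_neg_one.mp hone
  · refine ⟨j₀, hu₀, hv₀, fun j hj => ?_⟩
    exact (Finset.sum_eq_zero_iff_of_nonneg fun j _ => hnonneg j).mp hrest j
      (mem_erase.mpr ⟨hj, mem_univ j⟩)
  · linarith [hu j₀]

lemma eq_mul_transpose_iff {ι : Type*} [Fintype ι] (a b c : ℤ) (V : Matrix (Fin 2) ι ℤ) :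
    !![a, b; b, c] = V * Vᵀ ↔
      a = ∑ j, V 0 j ^ 2 ∧ b = ∑ j, V 0 j * V 1 j ∧ c = ∑ j, V 1 j ^ 2 := by
  simp only [← Matrix.ext_iff, Fin.forall_fin_two, mul_apply, transpose_apply, sq]
  simp only [of_apply, cons_val', cons_val_zero, cons_val_one, empty_val', cons_val_fin_one,
    mul_comm (V 1 _)]
  tauto

lemma exists_col_eq_one_one {ι : Type*} [Fintype ι] {a c : ℤ} {V : Matrix (Fin 2) ι ℤ}
    (hV : ∀ i j, 0 ≤ V i j) (hA : !![a, 1; 1, c] = V * Vᵀ) :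
    ∃ j₀, V 0 j₀ = 1 ∧ V 1 j₀ = 1 ∧ ∀ j ≠ j₀, V 0 j * V 1 j = 0 :=
  exists_eq_one_of_sum_mul_eq_one (hV 0) (hV 1) ((eq_mul_transpose_iff a 1 c V).mp hA).2.1.symm

lemma one_add_numSquares_add_numSquares_le {ι : Type*} [Fintype ι] {a c : ℤ}
    {V : Matrix (Fin 2) ι ℤ} (hV : ∀ i j, 0 ≤ V i j) (hA : !![a, 1; 1, c] = V * Vᵀ) :
    1 + numSquares (a - 1) + numSquares (c - 1) ≤ Fintype.card ι := by
  classical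
  obtain ⟨ha, -, hc⟩ := (eq_mul_transpose_iff a 1 c V).mp hA
  obtain ⟨j₀, h₀, h₁, hdisj⟩ := exists_col_eq_one_one hV hA
  set S := {j ∈ univ.erase j₀ | V 0 j ≠ 0}
  set T := {j ∈ univ.erase j₀ | V 1 j ≠ 0}
  have hST : Disjoint S T := by
    refine Finset.disjoint_left.mpr fun j hS hT => ?_
    simp only [S, T, mem_filter, mem_erase] at hS hT
    exact mul_ne_zero hS.2 hT.2 (hdisj j hS.1.1)
  have hcard : #S + #T ≤ Fintype.card ι - 1 := by
    rw [← card_union_of_disjoint hST, ← card_univ, ← card_erase_of_mem (mem_univ j₀)]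
    exact card_le_card (union_subset (filter_subset _ _) (filter_subset _ _))
  have hpos : 0 < Fintype.card ι := Fintype.card_pos_iff.mpr ⟨j₀⟩
  have hp : numSquares (a - 1) ≤ #S := ha ▸ numSquares_sum_sq_sub_one_le (V 0) h₀
  have hq : numSquares (c - 1) ≤ #T := hc ▸ numSquares_sum_sq_sub_one_le (V 1) h₁
  omega

lemma exists_factorization_intCpRank {A : Matrix (Fin 2) (Fin 2) ℤ} {m : ℕ}
    {V : Matrix (Fin 2) (Fin m) ℤ} (hV : ∀ i j, 0 ≤ V i j) (hA : A = V * Vᵀ) :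
    ∃ W : Matrix (Fin 2) (Fin (intCpRank A)) ℤ, (∀ i j, 0 ≤ W i j) ∧ A = W * Wᵀ :=
  Nat.sInf_mem (s := {m | ∃ V : Matrix (Fin 2) (Fin m) ℤ, (∀ i j, 0 ≤ V i j) ∧ A = V * Vᵀ})
    ⟨m, V, hV, hA⟩

lemma exists_factorization_of_sum_sq {a c : ℤ} {p q : ℕ} {f : Fin p → ℤ} {g : Fin q → ℤ}
    (hf : a - 1 = ∑ i, f i ^ 2) (hg : c - 1 = ∑ i, g i ^ 2) :
    ∃ V : Matrix (Fin 2) (Fin (1 + p + q)) ℤ, (∀ i j, 0 ≤ V i j) ∧ !![a, 1; 1, c] = V * Vᵀ := by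
  let u : Fin (1 + p + q) → ℤ := Fin.append (Fin.append ![1] fun i => |f i|) 0
  let v : Fin (1 + p + q) → ℤ := Fin.append (Fin.append ![1] 0) fun i => |g i|
  refine ⟨Matrix.of ![u, v], ?_, ?_⟩
  · rw [Fin.forall_fin_two]
    constructor <;> intro j <;> refine Fin.addCases (Fin.addCases ?_ ?_) ?_ j <;> intro k <;>
      simp [u, v]
  · rw [eq_mul_transpose_iff]
    simp [u, v, Fin.sum_univ_add, ← hf, ← hg]

theorem off_diag_one_structure_general (a c : ℤ) (ha : 0 < a) (hc : 0 < c) :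
    (∀ (m : ℕ) (V : Matrix (Fin 2) (Fin m) ℤ), (∀ i j, 0 ≤ V i j) →
      !![a, 1; 1, c] = V * Vᵀ → ∃! j : Fin m, V 0 j = 1 ∧ V 1 j = 1) ∧
    intCpRank !![a, 1; 1, c] =
      1 + sInf {s : ℕ | ∃ f : Fin s → ℤ, a - 1 = ∑ i, f i ^ 2}
        + sInf {s : ℕ | ∃ f : Fin s → ℤ, c - 1 = ∑ i, f i ^ 2} := by
  refine ⟨fun m V hV hA => ?_, ?_⟩
  · obtain ⟨j₀, h₀, h₁, hdisj⟩ := exists_col_eq_one_one hV hA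
    refine ⟨j₀, ⟨h₀, h₁⟩, fun j ⟨hj₀, hj₁⟩ => ?_⟩
    by_contra hne
    simpa [hj₀, hj₁] using hdisj j hne
  · show intCpRank _ = 1 + numSquares (a - 1) + numSquares (c - 1)
    obtain ⟨f, hf⟩ := exists_sum_sq_numSquares (n := a - 1) (by omega)
    obtain ⟨g, hg⟩ := exists_sum_sq_numSquares (n := c - 1) (by omega)
    obtain ⟨V, hV, hA⟩ := exists_factorization_of_sum_sq hf hg
    refine le_antisymm (Nat.sInf_le ⟨V, hV, hA⟩) ?_
    obtain ⟨W, hW, hAW⟩ := exists_factorization_intCpRank hV hA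
    simpa only [Fintype.card_fin] using one_add_numSquares_add_numSquares_le hW hAW

theorem off_diag_one_structure (a c : ℤ) (ha : 0 < a) (hc : 0 < c) (hdet : 1 ≤ a * c) :
    (∀ (m : ℕ) (V : Matrix (Fin 2) (Fin m) ℤ), (∀ i j, 0 ≤ V i j) →
      !![a, 1; 1, c] = V * Vᵀ → ∃! j : Fin m, V 0 j = 1 ∧ V 1 j = 1) ∧
    intCpRank !![a, 1; 1, c] =
      1 + sInf {s : ℕ | ∃ f : Fin s → ℤ, a - 1 = ∑ i, f i ^ 2}
        + sInf {s : ℕ | ∃ f : Fin s → ℤ, c - 1 = ∑ i, f i ^ 2} :=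
  off_diag_one_structure_general a c ha hc
end

section
/- If a and c are positive integers both divisible by 8, then the matrix [[a,1],[1,c]] has integer cp-rank exactly 9. -/
/-!
In a factorization `!![a, 1; 1, c] = V * Vᵀ` with rows `x, y ≥ 0`, the condition `x ⬝ᵥ y = 1`
forces exactly one column where both rows are nonzero, and there both entries are `1`. The other
nonzero entries of `x` then have squares summing to `a - 1 ≡ 7 [ZMOD 8]`, and three squares are
never `7` modulo `8`, so `x` has at least five nonzero entries; likewise `y`. Hence `V` has at
least `5 + 5 - 1 = 9` columns. Conversely, writing `a - 1` and `c - 1` as sums of four squares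
(Lagrange) gives a factorization with `1 + 4 + 4` columns.
-/

open Matrix

open Finset

lemma Matrix.fin_two_eq_mul_transpose_self_iff {ι R : Type*} [Fintype ι] [Mul R]
    [AddCommMonoid R] {a b c d : R} (V : Matrix (Fin 2) ι R) :
    !![a, b; c, d] = V * Vᵀ ↔
      a = V 0 ⬝ᵥ V 0 ∧ b = V 0 ⬝ᵥ V 1 ∧ c = V 1 ⬝ᵥ V 0 ∧ d = V 1 ⬝ᵥ V 1 := by
  simp only [← Matrix.ext_iff, Fin.forall_fin_two, mul_apply', and_assoc]
  rfl

lemma exists_fin_sum_sq_eq_of_card_le {ι R : Type*} [DecidableEq ι] [Semiring R]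
    (g : ι → R) {n : ℕ} : ∀ {s : Finset ι}, #s ≤ n →
      ∃ v : Fin n → R, ∑ i ∈ s, g i ^ 2 = ∑ i, v i ^ 2 := by
  induction n with
  | zero => intro s hs; simp_all
  | succ n ih =>
    intro s hs
    rcases s.eq_empty_or_nonempty with rfl | ⟨i, hi⟩
    · exact ⟨0, by simp⟩
    · obtain ⟨v, hv⟩ := ih (s := s.erase i) (by rw [card_erase_of_mem hi]; omega)
      exact ⟨Fin.cons (g i) v, by rw [Fin.sum_univ_succ, ← add_sum_erase s _ hi, hv]; rfl⟩

lemma ZMod.sq_add_sq_add_sq_ne_seven : ∀ x y z : ZMod 8, x ^ 2 + y ^ 2 + z ^ 2 ≠ 7 := by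
  decide

lemma four_le_card_of_sum_sq_modEq_seven {ι : Type*} [DecidableEq ι] (s : Finset ι)
    (f : ι → ℤ) (h : ∑ i ∈ s, f i ^ 2 ≡ 7 [ZMOD 8]) : 4 ≤ #s := by
  by_contra! hs
  obtain ⟨v, hv⟩ := exists_fin_sum_sq_eq_of_card_le (fun i ↦ (f i : ZMod 8)) (n := 3)
    (Nat.le_of_lt_succ hs)
  have h8 := (ZMod.intCast_eq_intCast_iff _ _ 8).2 h
  push_cast at h8
  rw [hv, Fin.sum_univ_three] at h8
  exact ZMod.sq_add_sq_add_sq_ne_seven _ _ _ h8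

lemma card_filter_ne_zero_le_sum {ι : Type*} [Fintype ι] {f : ι → ℤ} (hf : 0 ≤ f) :
    (#{i | f i ≠ 0} : ℤ) ≤ ∑ i, f i := by
  calc (#{i | f i ≠ 0} : ℤ) = #{i | f i ≠ 0} • 1 := by simp
    _ ≤ ∑ i with f i ≠ 0, f i :=
      card_nsmul_le_sum _ _ _ fun i hi ↦ (hf i).lt_of_ne' (mem_filter.1 hi).2
    _ = ∑ i, f i := sum_filter_ne_zero _

lemma exists_eq_one_of_dotProduct_eq_one {ι : Type*} [Fintype ι] {x y : ι → ℤ}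
    (hx : 0 ≤ x) (hy : 0 ≤ y) (hxy : x ⬝ᵥ y = 1) : ∃ j, x j = 1 ∧ y j = 1 := by
  have hnonneg : ∀ i ∈ univ, 0 ≤ x i * y i := fun i _ ↦ mul_nonneg (hx i) (hy i)
  obtain ⟨j, -, hj⟩ := exists_ne_zero_of_sum_ne_zero (hxy.trans_ne one_ne_zero)
  have hj1 : x j * y j = 1 :=
    le_antisymm (hxy ▸ single_le_sum hnonneg (mem_univ j)) ((hnonneg j (mem_univ j)).lt_of_ne' hj)
  have hxj := Int.eq_one_of_mul_eq_one_right (hx j) hj1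
  exact ⟨j, hxj, by simpa [hxj] using hj1⟩

lemma five_le_card_filter_ne_zero_of_eight_dvd {ι : Type*} [Fintype ι] [DecidableEq ι]
    {x : ι → ℤ} {j : ι} (hj : x j = 1) (h8 : 8 ∣ x ⬝ᵥ x) : 5 ≤ #{i | x i ≠ 0} := by
  set S : Finset ι := {i | x i ≠ 0}
  have hjS : j ∈ S := by simp [S, hj]
  have hsum : ∑ i ∈ S.erase j, x i ^ 2 = x ⬝ᵥ x - 1 := by
    rw [sum_erase_eq_sub hjS, hj, one_pow, sum_filter_of_ne fun i _ h ↦ by simpa using h]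
    simp [dotProduct, sq]
  have h4 := four_le_card_of_sum_sq_modEq_seven (S.erase j) x <| by
    rw [hsum]; exact ((Int.modEq_zero_iff_dvd.2 h8).sub_right 1).trans (by decide)
  rw [card_erase_of_mem hjS] at h4
  omega

lemma nine_le_card_of_dotProduct_eq_one {ι : Type*} [Fintype ι] [DecidableEq ι]
    {x y : ι → ℤ} (hx : 0 ≤ x) (hy : 0 ≤ y) (hxy : x ⬝ᵥ y = 1) (hxx : 8 ∣ x ⬝ᵥ x)
    (hyy : 8 ∣ y ⬝ᵥ y) : 9 ≤ Fintype.card ι := by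
  obtain ⟨j, hxj, hyj⟩ := exists_eq_one_of_dotProduct_eq_one hx hy hxy
  have hinter : #(({i | x i ≠ 0} : Finset ι) ∩ ({i | y i ≠ 0} : Finset ι)) ≤ 1 := by
    have := card_filter_ne_zero_le_sum fun i ↦ mul_nonneg (hx i) (hy i)
    simp_rw [← filter_and, ← mul_ne_zero_iff]
    exact_mod_cast this.trans_eq hxy
  have hunion := card_union_add_card_inter ({i | x i ≠ 0} : Finset ι) {i | y i ≠ 0}
  have := card_le_univ (({i | x i ≠ 0} : Finset ι) ∪ ({i | y i ≠ 0} : Finset ι))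
  have := five_le_card_filter_ne_zero_of_eight_dvd hxj hxx
  have := five_le_card_filter_ne_zero_of_eight_dvd hyj hyy
  omega

lemma exists_fin_four_nonneg_dotProduct_self_eq {n : ℤ} (hn : 0 ≤ n) :
    ∃ v : Fin 4 → ℤ, 0 ≤ v ∧ v ⬝ᵥ v = n := by
  lift n to ℕ using hn
  obtain ⟨a, b, c, d, h⟩ := Nat.sum_four_squares n
  refine ⟨![a, b, c, d], fun i ↦ by fin_cases i <;> simp, ?_⟩
  simp [dotProduct, Fin.sum_univ_four, ← h, sq]

lemma exists_nonneg_mul_transpose_eq {k l : ℕ} {p : Fin k → ℤ} {q : Fin l → ℤ}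
    (hp : 0 ≤ p) (hq : 0 ≤ q) : ∃ V : Matrix (Fin 2) (Fin (k + l + 1)) ℤ,
      (∀ i j, 0 ≤ V i j) ∧ !![1 + p ⬝ᵥ p, 1; 1, 1 + q ⬝ᵥ q] = V * Vᵀ := by
  let x : Fin (k + l + 1) → ℤ := Fin.cons 1 (Fin.append p 0)
  let y : Fin (k + l + 1) → ℤ := Fin.cons 1 (Fin.append 0 q)
  refine ⟨of ![x, y], ?_, ?_⟩
  · have hcons {n : ℕ} {v : Fin n → ℤ} (hv : 0 ≤ v) :
        ∀ j, 0 ≤ (Fin.cons 1 v : Fin (n + 1) → ℤ) j :=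
      Fin.cases zero_le_one hv
    refine Fin.forall_fin_two.2
      ⟨hcons fun j ↦ Fin.addCases (fun j ↦ ?_) (fun j ↦ ?_) j,
        hcons fun j ↦ Fin.addCases (fun j ↦ ?_) (fun j ↦ ?_) j⟩
    · simpa using hp j
    · simp
    · simp
    · simpa using hq j
  · rw [fin_two_eq_mul_transpose_self_iff]
    simp [x, y, dotProduct, Fin.sum_univ_succ, Fin.sum_univ_add]

theorem cp_rank_nine (a c : ℤ) (ha : 0 < a) (hc : 0 < c)
    (ha8 : 8 ∣ a) (hc8 : 8 ∣ c) :
    intCpRank !![a, 1; 1, c] = 9 := by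
  refine IsLeast.csInf_eq ⟨?_, ?_⟩
  · obtain ⟨p, hp, hpa⟩ := exists_fin_four_nonneg_dotProduct_self_eq (n := a - 1) (by omega)
    obtain ⟨q, hq, hqc⟩ := exists_fin_four_nonneg_dotProduct_self_eq (n := c - 1) (by omega)
    simpa [hpa, hqc] using exists_nonneg_mul_transpose_eq hp hq
  · rintro m ⟨V, hV, hA⟩
    obtain ⟨hxx, hxy, -, hyy⟩ := (fin_two_eq_mul_transpose_self_iff V).1 hA
    simpa using nine_le_card_of_dotProduct_eq_one (hV 0) (hV 1) hxy.symm (hxx ▸ ha8) (hyy ▸ hc8)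
end

section
/- There exist 2×2 integer doubly nonnegative matrices with integer cp-rank at least 9; for example A = [[8,1],[1,8]]. -/
open Matrix

open Finset

/-!
Write `a, b` for the rows of a nonnegative integer factor `V` of `!![8, 1; 1, 8]`. Since
`a ⬝ᵥ b = 1` is a sum of nonnegative integers, `a` and `b` share exactly one nonzero
coordinate, where both equal `1`. Away from it, the squares of each row sum to `7`, which is not
a sum of three squares because squares are `0, 1, 4` modulo `8`. So each row has at least four
further nonzero coordinates, disjoint from those of the other row, and `V` has at least
`1 + 4 + 4 = 9` columns, and `9` is attained.
-/

theorem Int.sq_add_sq_add_sq_emod_eight_ne_seven (a b c : ℤ) :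
    (a ^ 2 + b ^ 2 + c ^ 2) % 8 ≠ 7 := by
  have hmod8 : ∀ x y z : ZMod 8, x ^ 2 + y ^ 2 + z ^ 2 ≠ 7 := by decide
  intro h
  have hcast := (ZMod.intCast_eq_intCast_iff' (a ^ 2 + b ^ 2 + c ^ 2) 7 8).mpr (by omega)
  push_cast at hcast
  exact hmod8 a b c hcast

theorem sum_sq_emod_eight_ne_seven_of_card_le_three {ι : Type*} (x : ι → ℤ) {t : Finset ι}
    (ht : #t ≤ 3) : (∑ k ∈ t, x k ^ 2) % 8 ≠ 7 := by
  classical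
  obtain h | h | h | h : #t = 0 ∨ #t = 1 ∨ #t = 2 ∨ #t = 3 := by omega
  · simp [card_eq_zero.mp h]
  · obtain ⟨a, rfl⟩ := card_eq_one.mp h
    simpa using Int.sq_add_sq_add_sq_emod_eight_ne_seven (x a) 0 0
  · obtain ⟨a, b, hab, rfl⟩ := card_eq_two.mp h
    simpa [sum_pair hab] using Int.sq_add_sq_add_sq_emod_eight_ne_seven (x a) (x b) 0
  · obtain ⟨a, b, c, hab, hac, hbc, rfl⟩ := card_eq_three.mp h
    rw [sum_insert (by simp [hab, hac]), sum_pair hbc, ← add_assoc]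
    exact Int.sq_add_sq_add_sq_emod_eight_ne_seven _ _ _

theorem four_le_card_filter_ne_zero_of_sum_sq_emod_eight {ι : Type*} (s : Finset ι) (x : ι → ℤ)
    (h : (∑ k ∈ s, x k ^ 2) % 8 = 7) : 4 ≤ #{k ∈ s | x k ≠ 0} := by
  rw [← sum_filter_of_ne (p := fun k => x k ≠ 0) fun k _ hk => by simpa using hk] at h
  by_contra hlt
  exact sum_sq_emod_eight_ne_seven_of_card_le_three x (by omega) h

theorem exists_eq_one_of_dotProduct_eq_one_s17 {ι : Type*} [Fintype ι] {a b : ι → ℤ} (ha : 0 ≤ a)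
    (hb : 0 ≤ b) (hab : a ⬝ᵥ b = 1) :
    ∃ k₀, a k₀ = 1 ∧ b k₀ = 1 ∧ ∀ k ≠ k₀, a k * b k = 0 := by
  classical
  have hsum : ∑ k, a k * b k = 1 := hab
  have hterm : ∀ k, 0 ≤ a k * b k := fun k => mul_nonneg (ha k) (hb k)
  obtain ⟨k₀, -, hk₀⟩ := exists_ne_zero_of_sum_ne_zero (hsum ▸ one_ne_zero)
  have hsplit := add_sum_erase univ (fun k => a k * b k) (mem_univ k₀)
  rw [hsum] at hsplit
  have hrest : ∑ k ∈ univ.erase k₀, a k * b k = 0 := by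
    have := sum_nonneg (s := univ.erase k₀) fun k _ => hterm k
    have := (hterm k₀).lt_of_ne' hk₀
    linarith
  have hprod : a k₀ * b k₀ = 1 := by linarith
  refine ⟨k₀, Int.eq_one_of_mul_eq_one_right (ha k₀) hprod,
    Int.eq_one_of_mul_eq_one_left (hb k₀) hprod, fun k hk => ?_⟩
  exact (sum_eq_zero_iff_of_nonneg fun k _ => hterm k).mp hrest k (mem_erase.mpr ⟨hk, mem_univ k⟩)

theorem nine_le_card_of_dotProduct {ι : Type*} [Fintype ι] {a b : ι → ℤ} {n : ℤ} (ha : 0 ≤ a)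
    (hb : 0 ≤ b) (hn : n % 8 = 0) (haa : a ⬝ᵥ a = n) (hbb : b ⬝ᵥ b = n) (hab : a ⬝ᵥ b = 1) :
    9 ≤ Fintype.card ι := by
  classical
  obtain ⟨k₀, ha₀, hb₀, hab₀⟩ := exists_eq_one_of_dotProduct_eq_one_s17 ha hb hab
  have hsupp : ∀ x : ι → ℤ, x ⬝ᵥ x = n → x k₀ = 1 → 4 ≤ #{k ∈ univ.erase k₀ | x k ≠ 0} := by
    intro x hxx hx₀
    apply four_le_card_filter_ne_zero_of_sum_sq_emod_eight
    have hsplit := add_sum_erase univ (fun k => x k ^ 2) (mem_univ k₀)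
    have hxx' : ∑ k, x k ^ 2 = n := by simp only [sq]; exact hxx
    rw [hxx', hx₀, one_pow] at hsplit
    omega
  have hdisj : Disjoint {k ∈ univ.erase k₀ | a k ≠ 0} {k ∈ univ.erase k₀ | b k ≠ 0} :=
    disjoint_filter.mpr fun k hk hak hbk => mul_ne_zero hak hbk (hab₀ k (ne_of_mem_erase hk))
  have hcard := card_le_card (union_subset (filter_subset _ _) (filter_subset _ _) :
    {k ∈ univ.erase k₀ | a k ≠ 0} ∪ {k ∈ univ.erase k₀ | b k ≠ 0} ⊆ univ.erase k₀)
  rw [card_union_of_disjoint hdisj, card_erase_of_mem (mem_univ _), card_univ] at hcard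
  have := hsupp a haa ha₀
  have := hsupp b hbb hb₀
  omega

theorem intCpRank_eight_one_one_eight : intCpRank !![8, 1; 1, 8] = 9 := by
  have hmem : ∃ V : Matrix (Fin 2) (Fin 9) ℤ, (∀ i j, 0 ≤ V i j) ∧ !![8, 1; 1, 8] = V * Vᵀ :=
    ⟨!![1, 2, 1, 1, 1, 0, 0, 0, 0; 1, 0, 0, 0, 0, 2, 1, 1, 1],
      by simp [Fin.forall_fin_succ], by decide⟩
  refine le_antisymm (Nat.sInf_le hmem) (le_csInf ⟨9, hmem⟩ ?_)
  rintro m ⟨V, hV, hA⟩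
  have hentry : ∀ i j, V i ⬝ᵥ V j = !![8, 1; 1, 8] i j := fun i j => by rw [hA]; rfl
  simpa using nine_le_card_of_dotProduct (a := V 0) (b := V 1) (n := 8) (hV 0) (hV 1)
    (by norm_num) (by simpa using hentry 0 0) (by simpa using hentry 1 1) (by simpa using hentry 0 1)

theorem exists_cp_rank_ge_nine :
    ∃ A : Matrix (Fin 2) (Fin 2) ℤ,
      (∀ i j, 0 ≤ A i j) ∧ A = Aᵀ ∧ (A 0 1) ^ 2 ≤ A 0 0 * A 1 1 ∧
      9 ≤ intCpRank A ∧ A = !![8, 1; 1, 8] :=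
  ⟨!![8, 1; 1, 8], by simp [Fin.forall_fin_succ], by decide, by decide,
    intCpRank_eight_one_one_eight.ge, rfl⟩
end

section
/- Let B = [[a,2],[2,c]] with integers c ≥ a ≥ 2 and ac ≥ 4. Then the integer cp-rank of B is at most 8. -/
open Matrix

/-!
A factorization `!![a, 2; 2, c] = V * Vᵀ` is a pair of nonnegative rows `f`, `g` with
`f ⬝ᵥ f = a`, `g ⬝ᵥ g = c` and `f ⬝ᵥ g = 2`. We split off the rank-one part `(u, v)ᵀ (u, v)` with
`u * v = 2` (or twice `(1, 1)ᵀ (1, 1)`), and write `a - u²`, `c - v²` as sums of three and four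
squares on disjoint columns: `3 + 4 + 1 = 3 + 3 + 1 + 1 = 8` columns. Going through the residues
mod 4, one of these choices always leaves a number `≡ 1, 2 (mod 4)` where three squares are needed.

Three squares suffice for `n ≡ 1, 2 (mod 4)` by the classical argument: Dirichlet's theorem gives a
prime `p` with `n ∣ p + 1` and `-n` a square mod `p`, from which one builds a positive definite
integral ternary form of determinant `1` with `n` as a diagonal coefficient. Reducing such a form by
transvections, the determinant condition forces the reduced form to be `x² + y² + z²`.
-/

namespace Matrix

variable {n : Type*} [DecidableEq n]

/-- Read as a Gram matrix: no basis vector gets shorter by adding or subtracting another one. -/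
def IsReduced (A : Matrix n n ℤ) : Prop := ∀ i j, i ≠ j → 2 * |A i j| ≤ A i i

theorem transpose_transvection (i j : n) (c : ℤ) :
    (transvection i j c)ᵀ = transvection j i c := by
  simp [transvection, transpose_add]

variable [Fintype n]

theorem posDef_transpose_mul_mul_iff {A P : Matrix n n ℤ} (hP : P.det = 1) :
    (Pᵀ * A * P).PosDef ↔ A.PosDef := by
  rw [← conjTranspose_eq_transpose_of_trivial, ← star_eq_conjTranspose]
  exact IsUnit.posDef_star_left_conjugate_iff ((isUnit_iff_isUnit_det P).mpr (by simp [hP]))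

theorem transvection_conj_apply_same (A : Matrix n n ℤ) (hA : A.IsSymm) (i j : n) (c : ℤ) :
    ((transvection i j c)ᵀ * A * transvection i j c) j j
      = A j j + 2 * c * A i j + c ^ 2 * A i i := by
  rw [transpose_transvection, Matrix.mul_assoc, transvection_mul_apply_same,
    mul_transvection_apply_same, mul_transvection_apply_same, hA.apply i j]
  ring

theorem transvection_conj_apply_of_ne (A : Matrix n n ℤ) {i j k : n} (hk : k ≠ j) (c : ℤ) :
    ((transvection i j c)ᵀ * A * transvection i j c) k k = A k k := by
  rw [transpose_transvection, Matrix.mul_assoc, transvection_mul_apply_of_ne _ _ _ _ hk,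
    mul_transvection_apply_of_ne _ _ _ _ hk]

theorem trace_transvection_conj (A : Matrix n n ℤ) (hA : A.IsSymm) {i j : n} (hij : i ≠ j)
    (c : ℤ) :
    ((transvection i j c)ᵀ * A * transvection i j c).trace
      = A.trace + 2 * c * A i j + c ^ 2 * A i i := by
  have h (k : n) : ((transvection i j c)ᵀ * A * transvection i j c) k k
      = A k k + if k = j then 2 * c * A i j + c ^ 2 * A i i else 0 := by
    split_ifs with hk
    · subst hk
      rw [transvection_conj_apply_same A hA]
      ring
    · rw [transvection_conj_apply_of_ne A hk, add_zero]
  simp only [trace, diag, h, Finset.sum_add_distrib, Finset.sum_ite_eq', Finset.mem_univ, if_true]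
  ring

theorem exists_det_eq_one_isReduced (A : Matrix n n ℤ) (hA : A.PosDef) :
    ∃ P : Matrix n n ℤ, P.det = 1 ∧ (Pᵀ * A * P).IsReduced := by
  induction h : A.trace.toNat using Nat.strong_induction_on generalizing A with
  | _ N ih =>
    by_cases hred : A.IsReduced
    · exact ⟨1, det_one, by simpa using hred⟩
    obtain ⟨i, j, hij, hlt⟩ : ∃ i j, i ≠ j ∧ A i i < 2 * |A i j| := by
      simpa [IsReduced] using hred
    have hne : A i j ≠ 0 := by
      rintro h0
      rw [h0, abs_zero] at hlt
      linarith [hA.diag_pos (i := i)]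
    have hsign : (A i j).sign ^ 2 = 1 := by
      rw [sq, ← Int.sign_mul, Int.sign_eq_one_of_pos (mul_self_pos.mpr hne)]
    -- replacing `e j` by `e j - sign (A i j) • e i` lowers `A j j` by `2 * |A i j| - A i i > 0`
    set T := transvection i j (-(A i j).sign)
    have hT : T.det = 1 := det_transvection_of_ne i j hij _
    have htr : (Tᵀ * A * T).trace < A.trace := by
      rw [trace_transvection_conj A (by simpa using hA.isHermitian) hij, neg_sq, hsign, mul_neg,
        neg_mul, mul_assoc, Int.sign_mul_self_eq_abs]
      linarith
    have hpos : (Tᵀ * A * T).PosDef := (posDef_transpose_mul_mul_iff hT).mpr hA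
    obtain ⟨P, hP, hPred⟩ :=
      ih _ (by have := hpos.posSemidef.trace_nonneg; omega) (Tᵀ * A * T) hpos rfl
    exact ⟨T * P, by rw [det_mul, hT, hP, one_mul], by
      simpa only [transpose_mul, Matrix.mul_assoc] using hPred⟩

end Matrix

theorem reduced_ternary_det_ne_one_of_diag_eq {a r s t : ℤ} (ha : 2 ≤ a)
    (hr : 2 * |r| ≤ a) (hs : 2 * |s| ≤ a) (ht : 2 * |t| ≤ a) :
    a * a * a + 2 * r * s * t - a * t ^ 2 - a * s ^ 2 - a * r ^ 2 ≠ 1 := by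
  intro hdet
  obtain ⟨k, rfl | rfl⟩ := Int.even_or_odd' a
  · have : (2 : ℤ) ∣ 1 :=
      ⟨4 * k ^ 3 + r * s * t - k * (r ^ 2 + s ^ 2 + t ^ 2), by linear_combination -hdet⟩
    omega
  · have hr' : |r| ≤ k := by omega
    have hs' : |s| ≤ k := by omega
    have ht' : |t| ≤ k := by omega
    have hk : 0 ≤ k := by omega
    have hrs : |r| * |s| ≤ k * k := mul_le_mul hr' hs' (abs_nonneg s) hk
    have hrst : |r| * |s| * |t| ≤ k * k * k := mul_le_mul hrs ht' (abs_nonneg t) (by positivity)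
    rw [← abs_mul, ← abs_mul] at hrst
    -- the determinant is at least `(3 * k + 1) ^ 2`
    nlinarith [neg_abs_le (r * s * t), abs_mul_abs_self r, abs_mul_abs_self s, abs_mul_abs_self t,
      mul_self_le_mul_self (abs_nonneg r) hr', mul_self_le_mul_self (abs_nonneg s) hs',
      mul_self_le_mul_self (abs_nonneg t) ht']

theorem reduced_ternary_min_eq_one {a b c r s t : ℤ} (ha : 0 < a) (hab : a ≤ b) (hbc : b ≤ c)
    (hr : 2 * |r| ≤ a) (hs : 2 * |s| ≤ a) (ht : 2 * |t| ≤ b)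
    (hdet : a * b * c + 2 * r * s * t - a * t ^ 2 - b * s ^ 2 - c * r ^ 2 = 1) : a = 1 := by
  by_contra ha1
  have ha2 : 2 ≤ a := by omega
  have hr2 : 4 * r ^ 2 ≤ a ^ 2 := by nlinarith [sq_abs r, abs_nonneg r]
  have hs2 : 4 * s ^ 2 ≤ a ^ 2 := by nlinarith [sq_abs s, abs_nonneg s]
  have ht2 : 4 * t ^ 2 ≤ b ^ 2 := by nlinarith [sq_abs t, abs_nonneg t]
  have hrst : -(a * a * b) ≤ 8 * (r * s * t) := by
    have hrs : 2 * |r| * (2 * |s|) ≤ a * a := mul_le_mul hr hs (by positivity) ha.le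
    have := mul_le_mul hrs ht (by positivity) (by positivity)
    rw [show 2 * |r| * (2 * |s|) * (2 * |t|) = 8 * |r * s * t| by
      rw [abs_mul, abs_mul]; ring] at this
    linarith [neg_abs_le (r * s * t)]
  -- `4 * det = 4` minus the bounds above on its four non-diagonal terms
  have key : 2 * (a * b) * (c - a) + a * b * (c - b) + a * c * (b - a) ≤ 4 := by
    nlinarith [mul_le_mul_of_nonneg_left hr2 (by linarith : (0 : ℤ) ≤ c),
      mul_le_mul_of_nonneg_left hs2 (by linarith : (0 : ℤ) ≤ b),
      mul_le_mul_of_nonneg_left ht2 ha.le]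
  have hab4 : 4 ≤ a * b := by nlinarith
  have hca : c = a := by
    nlinarith [mul_nonneg (by nlinarith : (0 : ℤ) ≤ a * b) (by linarith : (0 : ℤ) ≤ c - b),
      mul_nonneg (by nlinarith : (0 : ℤ) ≤ a * c) (by linarith : (0 : ℤ) ≤ b - a)]
  obtain rfl : b = a := by omega
  subst hca
  exact reduced_ternary_det_ne_one_of_diag_eq ha2 hr hs ht hdet

theorem reduced_ternary_eq_identity {a b c r s t : ℤ} (ha : 0 < a) (hb : 0 < b) (hc : 0 < c)
    (hra : 2 * |r| ≤ a) (hrb : 2 * |r| ≤ b) (hsa : 2 * |s| ≤ a) (hsc : 2 * |s| ≤ c)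
    (htb : 2 * |t| ≤ b) (htc : 2 * |t| ≤ c)
    (hdet : a * b * c + 2 * r * s * t - a * t ^ 2 - b * s ^ 2 - c * r ^ 2 = 1) :
    a = 1 ∧ b = 1 ∧ c = 1 ∧ r = 0 ∧ s = 0 ∧ t = 0 := by
  wlog hab : a ≤ b generalizing a b c r s t
  · have := this hb ha hc hrb hra htb htc hsa hsc (by linear_combination hdet) (by omega)
    omega
  wlog hac : a ≤ c generalizing a b c r s t
  · have := this hc hb ha htc htb hsc hsa hrb hra (by linear_combination hdet) (by omega)
      (by omega)
    omega
  wlog hbc : b ≤ c generalizing a b c r s t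
  · have := this ha hc hb hsa hsc hra hrb htc htb (by linear_combination hdet) hac hab (by omega)
    omega
  obtain rfl := reduced_ternary_min_eq_one ha hab hbc hra hsa htb hdet
  obtain rfl : r = 0 := abs_eq_zero.mp (by linarith [abs_nonneg r])
  obtain rfl : s = 0 := abs_eq_zero.mp (by linarith [abs_nonneg s])
  obtain rfl : t = 0 := by nlinarith [sq_abs t, abs_nonneg t]
  have hbc1 : b * c = 1 := by linear_combination hdet
  obtain rfl : b = 1 := by nlinarith
  exact ⟨rfl, rfl, by linarith, rfl, rfl, rfl⟩

namespace Matrix.PosDef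

variable {A : Matrix (Fin 3) (Fin 3) ℤ}

theorem eq_one_of_isReduced_of_det_eq_one (hA : A.PosDef) (hred : A.IsReduced)
    (hdet : A.det = 1) : A = 1 := by
  have hsymm (i j : Fin 3) : A j i = A i j := by simpa using hA.isHermitian.apply i j
  have h := reduced_ternary_eq_identity (hA.diag_pos (i := 0)) (hA.diag_pos (i := 1))
    (hA.diag_pos (i := 2)) (hred 0 1 (by decide)) (hsymm 0 1 ▸ hred 1 0 (by decide))
    (hred 0 2 (by decide)) (hsymm 0 2 ▸ hred 2 0 (by decide))
    (hred 1 2 (by decide)) (hsymm 1 2 ▸ hred 2 1 (by decide))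
    (by rw [det_fin_three, hsymm 0 1, hsymm 0 2, hsymm 1 2] at hdet; linear_combination hdet)
  ext i j
  fin_cases i <;> fin_cases j <;> simp [h, hsymm 0 1, hsymm 0 2, hsymm 1 2]

theorem exists_eq_transpose_mul_self (hA : A.PosDef) (hdet : A.det = 1) :
    ∃ Q : Matrix (Fin 3) (Fin 3) ℤ, A = Qᵀ * Q := by
  obtain ⟨P, hP, hred⟩ := exists_det_eq_one_isReduced A hA
  have hPA : Pᵀ * A * P = 1 :=
    ((posDef_transpose_mul_mul_iff hP).mpr hA).eq_one_of_isReduced_of_det_eq_one hred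
      (by simp [hP, hdet])
  have hunit : IsUnit P.det := by simp [hP]
  refine ⟨P⁻¹, ?_⟩
  calc A = (P * P⁻¹)ᵀ * A * (P * P⁻¹) := by simp [mul_nonsing_inv P hunit]
    _ = (P⁻¹)ᵀ * (Pᵀ * A * P) * P⁻¹ := by simp only [transpose_mul, Matrix.mul_assoc]
    _ = (P⁻¹)ᵀ * P⁻¹ := by rw [hPA, Matrix.mul_one]

theorem exists_dotProduct_self_eq_diag (hA : A.PosDef) (hdet : A.det = 1) (i : Fin 3) :
    ∃ v : Fin 3 → ℤ, v ⬝ᵥ v = A i i := by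
  obtain ⟨Q, rfl⟩ := hA.exists_eq_transpose_mul_self hdet
  exact ⟨fun k => Q k i, by simp [mul_apply, dotProduct]⟩

end Matrix.PosDef

theorem posDef_of_add_one_eq_mul {n m k w C : ℤ} (hn : 0 < n) (hm : 0 < m)
    (hk : m + 1 = n * k) (hw : k * C ^ 2 + 1 = m * w) :
    (!![n, 1, C; 1, k, 0; C, 0, w]).PosDef := by
  refine PosDef.of_dotProduct_mulVec_pos ?_ fun x hx => ?_
  · ext i j
    fin_cases i <;> fin_cases j <;> rfl
  have hQ : n * m * (star x ⬝ᵥ (!![n, 1, C; 1, k, 0; C, 0, w] *ᵥ x))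
      = m * (n * x 0 + x 1 + C * x 2) ^ 2 + (m * x 1 - C * x 2) ^ 2 + n * x 2 ^ 2 := by
    simp only [dotProduct, mulVec, star_trivial, Fin.sum_univ_three, of_apply, cons_val',
      cons_val_zero, cons_val_one, cons_val, cons_val_fin_one]
    linear_combination (-(m * x 1 ^ 2 + C ^ 2 * x 2 ^ 2)) * hk - (n * x 2 ^ 2) * hw
  refine pos_of_mul_pos_right (hQ ▸ ?_ : 0 < n * m * _) (by positivity)
  by_contra hle
  have hsum := le_antisymm (not_lt.mp hle) (by positivity)
  rw [add_eq_zero_iff_of_nonneg (by positivity) (by positivity),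
    add_eq_zero_iff_of_nonneg (by positivity) (by positivity)] at hsum
  obtain ⟨⟨h0, h1⟩, h2⟩ := hsum
  have h2 : x 2 = 0 := by simpa [hn.ne'] using h2
  have h1 : x 1 = 0 := by simpa [h2, hm.ne'] using h1
  have h0 : x 0 = 0 := by simpa [h1, h2, hm.ne', hn.ne'] using h0
  exact hx (funext fun i => by fin_cases i <;> assumption)

theorem exists_dotProduct_self_eq_of_dvd {n m C : ℤ} (hn : 0 < n) (hm : 0 < m)
    (hnm : n ∣ m + 1) (hmC : m ∣ C ^ 2 + n) : ∃ v : Fin 3 → ℤ, v ⬝ᵥ v = n := by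
  obtain ⟨k, hk⟩ := hnm
  obtain ⟨w, hw⟩ : m ∣ k * C ^ 2 + 1 := by
    have hcop : IsCoprime m n := ⟨-1, k, by linear_combination -hk⟩
    obtain ⟨e, he⟩ := hmC
    exact hcop.dvd_of_dvd_mul_left ⟨C ^ 2 + e, by linear_combination -C ^ 2 * hk + he⟩
  have hdet : (!![n, 1, C; 1, k, 0; C, 0, w]).det = 1 := by
    simp only [det_fin_three, of_apply, cons_val', cons_val_zero, cons_val_one, cons_val,
      cons_val_fin_one]
    linear_combination -w * hk - hw
  simpa using (posDef_of_add_one_eq_mul hn hm hk hw).exists_dotProduct_self_eq_diag hdet 0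

theorem Nat.exists_prime_modEq_and_modEq {m n a b : ℕ} (hm : m ≠ 0) (hn : n ≠ 0)
    (hmn : m.Coprime n) (ha : a.Coprime m) (hb : b.Coprime n) :
    ∃ p : ℕ, p.Prime ∧ p ≡ a [MOD m] ∧ p ≡ b [MOD n] := by
  let k := Nat.chineseRemainder hmn a b
  have hk : (k : ℕ).Coprime (m * n) :=
    Nat.Coprime.mul_right (by rw [Nat.Coprime, k.2.1.gcd_eq]; exact ha)
      (by rw [Nat.Coprime, k.2.2.gcd_eq]; exact hb)
  obtain ⟨p, -, hp, hpk⟩ := Nat.forall_exists_prime_gt_and_modEq 0 (mul_ne_zero hm hn) hk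
  exact ⟨p, hp, (hpk.of_mul_right n).trans k.2.1, (hpk.of_mul_left m).trans k.2.2⟩

theorem exists_prime_mod_eight_eq_and_dvd_add_one {q : ℕ} (hq : Odd q) :
    ∃ p : ℕ, p.Prime ∧ p % 8 = q % 4 ∧ q ∣ p + 1 := by
  have h8 : Nat.Coprime 8 q := (Nat.coprime_two_left.mpr hq).pow_left 3
  have hq4 : (q % 4).Coprime 8 := by
    rcases Nat.odd_mod_four_iff.mp (Nat.odd_iff.mp hq) with h | h <;> rw [h] <;> decide
  have hq1 : (q - 1).Coprime q :=
    (Nat.coprime_self_sub_left hq.pos).mpr (Nat.coprime_one_left q)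
  obtain ⟨p, hp, hp8, hpq⟩ :=
    Nat.exists_prime_modEq_and_modEq (by norm_num) hq.pos.ne' h8 hq4 hq1
  refine ⟨p, hp, by unfold Nat.ModEq at hp8; omega, ?_⟩
  have := hpq.add_right 1
  rw [Nat.sub_add_cancel hq.pos] at this
  exact Nat.modEq_zero_iff_dvd.mp (this.trans (Nat.modEq_zero_iff_dvd.mpr dvd_rfl))

theorem jacobiSym_eq_one_of_dvd_add_one {p q : ℕ} (hp : Odd p) (hq : Odd q)
    (hpq : p % 4 = q % 4) (hdvd : q ∣ p + 1) : jacobiSym q p = 1 := by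
  have hJ : jacobiSym p q = ZMod.χ₄ q := by
    rw [← jacobiSym.at_neg_one hq]
    refine jacobiSym.mod_left' (Int.emod_eq_emod_iff_emod_sub_eq_zero.mpr ?_)
    rw [sub_neg_eq_add]
    exact Int.emod_eq_zero_of_dvd (by exact_mod_cast hdvd)
  rcases Nat.odd_mod_four_iff.mp (Nat.odd_iff.mp hq) with h | h
  · rw [jacobiSym.quadratic_reciprocity_one_mod_four h hp, hJ, ZMod.χ₄_nat_one_mod_four h]
  · rw [jacobiSym.quadratic_reciprocity_three_mod_four h (hpq.trans h), hJ,
      ZMod.χ₄_nat_three_mod_four h, neg_neg]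

theorem exists_prime_jacobiSym_neg_eq_one {n : ℕ} (hn : n % 4 = 1 ∨ n % 4 = 2) :
    ∃ p : ℕ, p.Prime ∧ n ∣ p + 1 ∧ jacobiSym (-n) p = 1 := by
  rcases hn with hn | hn
  · have hodd : Odd n := Nat.odd_iff.mpr (by omega)
    obtain ⟨p, hp, hp8, hdvd⟩ := exists_prime_mod_eight_eq_and_dvd_add_one hodd
    have hpodd : Odd p := Nat.odd_iff.mpr (by omega)
    refine ⟨p, hp, hdvd, ?_⟩
    rw [neg_eq_neg_one_mul, jacobiSym.mul_left, jacobiSym.at_neg_one hpodd,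
      jacobiSym_eq_one_of_dvd_add_one hpodd hodd (by omega) hdvd,
      ZMod.χ₄_nat_one_mod_four (by omega), mul_one]
  · obtain ⟨q, rfl⟩ : 2 ∣ n := Nat.dvd_of_mod_eq_zero (by omega)
    have hodd : Odd q := Nat.odd_iff.mpr (by omega)
    obtain ⟨p, hp, hp8, hdvd⟩ := exists_prime_mod_eight_eq_and_dvd_add_one hodd
    have hpodd : Odd p := Nat.odd_iff.mpr (by omega)
    refine ⟨p, hp, Nat.Coprime.mul_dvd_of_dvd_of_dvd (Nat.coprime_two_left.mpr hodd)
      (even_iff_two_dvd.mp hpodd.add_one) hdvd, ?_⟩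
    have h2 : ZMod.χ₈' p = 1 := by
      have := Nat.odd_mod_four_iff.mp (Nat.odd_iff.mp hodd)
      rw [ZMod.χ₈'_nat_eq_if_mod_eight, if_neg (by omega), if_pos (by omega)]
    rw [Nat.cast_mul, Nat.cast_two, ← neg_mul, jacobiSym.mul_left, jacobiSym.at_neg_two hpodd,
      h2, jacobiSym_eq_one_of_dvd_add_one hpodd hodd (by omega) hdvd, mul_one]

theorem Nat.exists_dotProduct_self_eq_of_mod_four {n : ℕ} (hn : n % 4 = 1 ∨ n % 4 = 2) :
    ∃ v : Fin 3 → ℤ, v ⬝ᵥ v = n := by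
  obtain ⟨p, hp, hdvd, hJ⟩ := exists_prime_jacobiSym_neg_eq_one hn
  have := Fact.mk hp
  obtain ⟨u, hu⟩ := ZMod.isSquare_of_jacobiSym_eq_one hJ
  refine exists_dotProduct_self_eq_of_dvd (m := p) (C := u.val) (by omega)
    (by exact_mod_cast hp.pos) (by exact_mod_cast hdvd) ?_
  rw [← ZMod.intCast_zmod_eq_zero_iff_dvd]
  push_cast at hu ⊢
  rw [ZMod.natCast_zmod_val]
  linear_combination -hu

theorem Nat.exists_dotProduct_self_eq (n : ℕ) : ∃ v : Fin 4 → ℤ, v ⬝ᵥ v = n := by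
  obtain ⟨a, b, c, d, h⟩ := Nat.sum_four_squares n
  exact ⟨![a, b, c, d], by simp [dotProduct, Fin.sum_univ_four, ← h, sq]⟩

theorem Fin.append_dotProduct_append {α : Type*} [Mul α] [AddCommMonoid α] {m k : ℕ}
    (f₁ g₁ : Fin m → α) (f₂ g₂ : Fin k → α) :
    Fin.append f₁ f₂ ⬝ᵥ Fin.append g₁ g₂ = f₁ ⬝ᵥ g₁ + f₂ ⬝ᵥ g₂ := by
  simp [dotProduct, Fin.sum_univ_add]

theorem intCpRank_le_of_rows {m : ℕ} (f g : Fin m → ℤ) (hf : 0 ≤ f) (hg : 0 ≤ g) :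
    intCpRank !![f ⬝ᵥ f, f ⬝ᵥ g; f ⬝ᵥ g, g ⬝ᵥ g] ≤ m := by
  refine Nat.sInf_le ⟨Matrix.of ![f, g], fun i j => ?_, ?_⟩
  · fin_cases i
    exacts [hf j, hg j]
  · ext i j
    fin_cases i <;> fin_cases j <;> simp [mul_apply, dotProduct, mul_comm]

theorem intCpRank_le_of_sum_sq_add {m k l : ℕ} (f : Fin m → ℤ) (g : Fin k → ℤ)
    (u v : Fin l → ℤ) (hu : 0 ≤ u) (hv : 0 ≤ v) :
    intCpRank !![f ⬝ᵥ f + u ⬝ᵥ u, u ⬝ᵥ v; u ⬝ᵥ v, g ⬝ᵥ g + v ⬝ᵥ v] ≤ m + k + l := by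
  have habs {j : ℕ} (h : Fin j → ℤ) : |h| ⬝ᵥ |h| = h ⬝ᵥ h := by simp [dotProduct]
  have happend {j j' : ℕ} {h₁ : Fin j → ℤ} {h₂ : Fin j' → ℤ} (h₁0 : 0 ≤ h₁) (h₂0 : 0 ≤ h₂) :
      0 ≤ Fin.append h₁ h₂ := fun i => by
    induction i using Fin.addCases
    exacts [by simpa using h₁0 _, by simpa using h₂0 _]
  have := intCpRank_le_of_rows (Fin.append (Fin.append |f| 0) u)
    (Fin.append (Fin.append 0 |g|) v) (happend (happend (abs_nonneg f) le_rfl) hu)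
    (happend (happend le_rfl (abs_nonneg g)) hv)
  simpa [Fin.append_dotProduct_append, habs] using this

theorem intCpRank_le_of_sub_two {a c : ℤ} (ha : ∃ f : Fin 3 → ℤ, f ⬝ᵥ f = a - 2)
    (hc : ∃ g : Fin 3 → ℤ, g ⬝ᵥ g = c - 2) : intCpRank !![a, 2; 2, c] ≤ 8 := by
  obtain ⟨f, hf⟩ := ha
  obtain ⟨g, hg⟩ := hc
  have h11 : (0 : Fin 2 → ℤ) ≤ ![1, 1] := fun i => by fin_cases i <;> simp
  simpa [hf, hg] using intCpRank_le_of_sum_sq_add f g ![1, 1] ![1, 1] h11 h11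

theorem intCpRank_le_of_sub_one_of_sub_four {a c : ℤ} {m k : ℕ}
    (ha : ∃ f : Fin m → ℤ, f ⬝ᵥ f = a - 1) (hc : ∃ g : Fin k → ℤ, g ⬝ᵥ g = c - 4) :
    intCpRank !![a, 2; 2, c] ≤ m + k + 1 := by
  obtain ⟨f, hf⟩ := ha
  obtain ⟨g, hg⟩ := hc
  simpa [hf, hg] using
    intCpRank_le_of_sum_sq_add f g ![1] ![2] (fun _ => by simp) (fun _ => by simp)

theorem intCpRank_le_of_sub_four_of_sub_one {a c : ℤ} {m k : ℕ}
    (ha : ∃ f : Fin m → ℤ, f ⬝ᵥ f = a - 4) (hc : ∃ g : Fin k → ℤ, g ⬝ᵥ g = c - 1) :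
    intCpRank !![a, 2; 2, c] ≤ m + k + 1 := by
  obtain ⟨f, hf⟩ := ha
  obtain ⟨g, hg⟩ := hc
  simpa [hf, hg] using
    intCpRank_le_of_sum_sq_add f g ![2] ![1] (fun _ => by simp) (fun _ => by simp)

theorem cp_rank_le_eight_general (a c : ℤ) (ha : 2 ≤ a) (hac : a ≤ c) :
    intCpRank !![a, 2; 2, c] ≤ 8 := by
  have three (n : ℤ) (h0 : 0 ≤ n) (h : n % 4 = 1 ∨ n % 4 = 2) :
      ∃ v : Fin 3 → ℤ, v ⬝ᵥ v = n := by
    lift n to ℕ using h0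
    exact Nat.exists_dotProduct_self_eq_of_mod_four (by omega)
  have four (n : ℤ) (h0 : 0 ≤ n) : ∃ v : Fin 4 → ℤ, v ⬝ᵥ v = n := by
    lift n to ℕ using h0
    exact Nat.exists_dotProduct_self_eq n
  by_cases hc : c < 4
  · have small (n : ℤ) (h0 : 0 ≤ n) (h1 : n ≤ 1) : ∃ v : Fin 3 → ℤ, v ⬝ᵥ v = n := by
      have hn : n * n = n := by nlinarith
      exact ⟨![n, 0, 0], by simp [dotProduct, Fin.sum_univ_three, hn]⟩
    exact intCpRank_le_of_sub_two (small _ (by omega) (by omega)) (small _ (by omega) (by omega))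
  rcases (by omega : a % 4 = 0 ∧ (c % 4 = 0 ∨ c % 4 = 3) ∨ a % 4 = 0 ∧ c % 4 = 1 ∨
      a % 4 = 0 ∧ c % 4 = 2 ∨ a % 4 = 1 ∨ a % 4 = 2 ∨ a % 4 = 3) with h | h | h | h | h
  · exact intCpRank_le_of_sub_two (three _ (by omega) (by omega)) (three _ (by omega) (by omega))
  · exact intCpRank_le_of_sub_one_of_sub_four (four _ (by omega)) (three _ (by omega) (by omega))
  · exact intCpRank_le_of_sub_four_of_sub_one (four _ (by omega)) (three _ (by omega) (by omega))
  · exact intCpRank_le_of_sub_four_of_sub_one (three _ (by omega) (by omega)) (four _ (by omega))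
  · exact intCpRank_le_of_sub_one_of_sub_four (three _ (by omega) (by omega)) (four _ (by omega))

theorem cp_rank_le_eight (a c : ℤ) (ha : 2 ≤ a) (hac : a ≤ c) (hdet : 4 ≤ a * c) :
    intCpRank !![a, 2; 2, c] ≤ 8 :=
  cp_rank_le_eight_general a c ha hac
end
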